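/- arXiv:1808.04410 — 4 statements merged into one kernel-verified Lean document; each statement's English description precedes it below -/
import Mathlib

section
/- Let H be a Hilbert space, let B ⊆ B(H) be a C*-subalgebra, and let {p_i}_{i∈I} be a complete orthogonal family of rank-one projections on H with C*({p_i : i∈I}) ⊆ B ⊆ W*({p_i : i∈I}), where W*({p_i}) is the von Neumann algebra generated by the p_i. If either (i) B is closed in the strong operator topology, or (ii) B is abstractly *-isomorphic to ℓ∞(X) for some set X, then B = W*({p_i : i∈I}). -/
/- Common definitions for formalising "Cartan subalgebras of uniform Roe algebras"
   (White–Willett).  We model C*-subalgebras of B(H) as norm-closed sets of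
   continuous linear operators underlying non-unital star subalgebras. -/

open scoped InnerProductSpace ENNReal
open Filter

noncomputable section

universe u v

namespace RoeCartan

variable {H : Type u} [NormedAddCommGroup H] [InnerProductSpace ℂ H] [CompleteSpace H]

/-- A (possibly non-unital) C*-subalgebra of `B(H)`, viewed as a set of operators:
a norm-closed set which underlies a non-unital star subalgebra. -/
def IsCstarSubalgebra (A : Set (H →L[ℂ] H)) : Prop :=
  IsClosed A ∧ ∃ S : NonUnitalStarSubalgebra ℂ (H →L[ℂ] H), (S : Set (H →L[ℂ] H)) = A

/-- An orthogonal projection on `H`. -/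
def IsProj (p : H →L[ℂ] H) : Prop := p * p = p ∧ IsSelfAdjoint p

/-- A rank-one operator on `H`. -/
def IsRankOne (p : H →L[ℂ] H) : Prop := Module.finrank ℂ (LinearMap.range (p : H →ₗ[ℂ] H)) = 1

/-- `B` is a maximal abelian (self-adjoint) subalgebra of `A`: it is commutative, and any
element of `A` commuting with all of `B` lies in `B`. -/
def IsMasaIn (B A : Set (H →L[ℂ] H)) : Prop :=
  B ⊆ A ∧ (∀ b₁ ∈ B, ∀ b₂ ∈ B, b₁ * b₂ = b₂ * b₁) ∧
    ∀ a ∈ A, (∀ b ∈ B, a * b = b * a) → a ∈ B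

/-- A minimal projection of `B`: a nonzero projection in `B` whose only subprojections in `B`
are `0` and itself. -/
def IsMinimalProjIn (B : Set (H →L[ℂ] H)) (p : H →L[ℂ] H) : Prop :=
  p ∈ B ∧ IsProj p ∧ p ≠ 0 ∧
    ∀ q ∈ B, IsProj q → q * p = q → q = 0 ∨ q = p

/-- A conditional expectation from `A` onto `B`: a positive linear contraction restricting to
the identity on `B` and satisfying the `B`-bimodule property. -/
def IsCondExp (A B : Set (H →L[ℂ] H)) (E : (H →L[ℂ] H) → H →L[ℂ] H) : Prop :=
  (∀ a ∈ A, E a ∈ B) ∧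
  (∀ a ∈ A, ∀ b ∈ A, E (a + b) = E a + E b) ∧
  (∀ (c : ℂ), ∀ a ∈ A, E (c • a) = c • E a) ∧
  (∀ a ∈ A, ‖E a‖ ≤ ‖a‖) ∧
  (∀ a ∈ A, a.IsPositive → (E a).IsPositive) ∧
  (∀ b ∈ B, E b = b) ∧
  (∀ b₁ ∈ B, ∀ b₂ ∈ B, ∀ a ∈ A, E (b₁ * a * b₂) = b₁ * E a * b₂)

/-- A faithful conditional expectation. -/
def IsFaithfulCondExp (A B : Set (H →L[ℂ] H)) (E : (H →L[ℂ] H) → H →L[ℂ] H) : Prop :=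
  IsCondExp A B E ∧ ∀ a ∈ A, E (star a * a) = 0 → a = 0

/-- The normaliser of `B` in `A`. -/
def NormalizerIn (A B : Set (H →L[ℂ] H)) : Set (H →L[ℂ] H) :=
  {a ∈ A | ∀ b ∈ B, a * b * star a ∈ B ∧ star a * b * a ∈ B}

/-- `B` contains an approximate unit for `A`: there is a net in `B` which converges in norm to
the identity when multiplied against any element of `A`. -/
def HasApproxUnitIn (B A : Set (H →L[ℂ] H)) : Prop :=
  ∃ (ι : Type) (l : Filter ι) (e : ι → H →L[ℂ] H), l.NeBot ∧ (∀ i, e i ∈ B) ∧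
    ∀ a ∈ A, Tendsto (fun i => e i * a) l (nhds a) ∧ Tendsto (fun i => a * e i) l (nhds a)

/-- The C*-algebra generated by a set `S` of operators: the norm closure of the star
subalgebra generated by `S`. -/
def CstarGen (S : Set (H →L[ℂ] H)) : Set (H →L[ℂ] H) :=
  closure ((NonUnitalStarAlgebra.adjoin ℂ S :
    NonUnitalStarSubalgebra ℂ (H →L[ℂ] H)) : Set (H →L[ℂ] H))

/-- The von Neumann algebra generated by a (self-adjoint) set: its double commutant. -/
def WStar (S : Set (H →L[ℂ] H)) : Set (H →L[ℂ] H) := Set.centralizer (Set.centralizer S)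

/-- `B` is a Cartan subalgebra of `A` (Renault): a MASA containing an approximate unit for `A`,
whose normaliser generates `A` as a C*-algebra, and which is the image of a faithful
conditional expectation. -/
def IsCartanIn (B A : Set (H →L[ℂ] H)) : Prop :=
  IsCstarSubalgebra A ∧ IsCstarSubalgebra B ∧
  IsMasaIn B A ∧ HasApproxUnitIn B A ∧
  CstarGen (NormalizerIn A B) = A ∧
  ∃ E, IsFaithfulCondExp A B E

/-- `B ⊆ A` is co-separable: `A` is generated as a C*-algebra by `B` together with countably
many elements of `A`. -/
def CoSeparableIn (B A : Set (H →L[ℂ] H)) : Prop :=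
  ∃ S : Set (H →L[ℂ] H), S.Countable ∧ S ⊆ A ∧ CstarGen (S ∪ B) = A

/-- A complete orthogonal family of rank-one projections: mutually orthogonal rank-one
projections whose ranges span a dense subspace of `H`. -/
def IsCompleteRankOneFamily {I : Type v} (p : I → H →L[ℂ] H) : Prop :=
  (∀ i, IsProj (p i) ∧ IsRankOne (p i)) ∧
  (∀ i j, i ≠ j → p i * p j = 0) ∧
  Dense ((⨆ i, LinearMap.range (p i : H →ₗ[ℂ] H) : Submodule ℂ H) : Set H)

/-- A complete orthogonal family of projections: mutually orthogonal projections summing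
strongly to the identity. -/
def IsCompleteProjFamily {I : Type v} (q : I → H →L[ℂ] H) : Prop :=
  (∀ i, IsProj (q i)) ∧ (∀ i j, i ≠ j → q i * q j = 0) ∧
  ∀ v : H, HasSum (fun i => q i v) v

/-- `B` is abstractly *-isomorphic to `ℓ∞(I)`. -/
def AbstractlyLinf (B : Set (H →L[ℂ] H)) (I : Type v) : Prop :=
  ∃ SB : NonUnitalStarSubalgebra ℂ (H →L[ℂ] H), (SB : Set (H →L[ℂ] H)) = B ∧
    Nonempty (SB ≃⋆ₐ[ℂ] lp (fun _ : I => ℂ) ∞)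

/-- A *-automorphism of the set `A` of operators. -/
def IsStarAutoOn (A : Set (H →L[ℂ] H)) (α : (H →L[ℂ] H) → H →L[ℂ] H) : Prop :=
  Set.BijOn α A A ∧
  (∀ a ∈ A, ∀ b ∈ A, α (a + b) = α a + α b) ∧
  (∀ a ∈ A, ∀ b ∈ A, α (a * b) = α a * α b) ∧
  (∀ (c : ℂ), ∀ a ∈ A, α (c • a) = c • α a) ∧
  ∀ a ∈ A, α (star a) = star (α a)

/-! ### `ℓ²(X)` and uniform Roe algebras -/

/-- `ℓ²(X)` with complex coefficients. -/
abbrev ell2 (X : Type v) : Type v := lp (fun _ : X => ℂ) 2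

/-- The canonical basis vector `δ_x` of `ℓ²(X)`. -/
def delta {X : Type v} (x : X) : ell2 X :=
  letI := Classical.decEq X
  lp.single 2 x 1

/-- The `(x,y)` matrix entry `⟨δ_x, a δ_y⟩` of an operator `a` on `ℓ²(X)`. -/
def matEntry {X : Type v} (a : ell2 X →L[ℂ] ell2 X) (x y : X) : ℂ := a (delta y) x

/-- The support of an operator on `ℓ²(X)`. -/
def opSupport {X : Type v} (a : ell2 X →L[ℂ] ell2 X) : Set (X × X) :=
  {q | matEntry a q.1 q.2 ≠ 0}

/-- `a` is a multiplication operator by a (necessarily bounded) function `X → ℂ`. -/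
def IsDiagonalOp {X : Type v} (a : ell2 X →L[ℂ] ell2 X) : Prop :=
  ∃ f : X → ℂ, ∀ (ξ : ell2 X) (x : X), a ξ x = f x * ξ x

/-- The copy of `ℓ∞(X)` inside `B(ℓ²(X))`, i.e. the multiplication operators. -/
def LinfOps (X : Type v) : Set (ell2 X →L[ℂ] ell2 X) := {a | IsDiagonalOp a}

/-- Finite propagation with respect to a metric. -/
def HasFinitePropagation {X : Type v} [MetricSpace X] (a : ell2 X →L[ℂ] ell2 X) : Prop :=
  ∃ r : ℝ, ∀ x y : X, matEntry a x y ≠ 0 → dist x y ≤ r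

/-- The uniform Roe algebra of a metric space: the norm closure of the finite propagation
operators on `ℓ²(X)`. -/
def RoeAlgebra (X : Type v) [MetricSpace X] : Set (ell2 X →L[ℂ] ell2 X) :=
  closure {a : ell2 X →L[ℂ] ell2 X | HasFinitePropagation a}

/-- A metric space has bounded geometry if balls of any fixed radius have uniformly
bounded (finite) cardinality. -/
def BoundedGeometry (X : Type v) [MetricSpace X] : Prop :=
  ∀ r : ℝ, ∃ N : ℕ, ∀ x : X,
    (Metric.closedBall x r).Finite ∧ (Metric.closedBall x r).ncard ≤ N

/-! ### Coarse structures -/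

/-- A coarse structure on a set `X` (Roe). -/
structure CoarseStructure (X : Type v) where
  sets : Set (Set (X × X))
  diag_mem : {q : X × X | q.1 = q.2} ∈ sets
  union_mem : ∀ ⦃E F⦄, E ∈ sets → F ∈ sets → E ∪ F ∈ sets
  comp_mem : ∀ ⦃E F⦄, E ∈ sets → F ∈ sets →
    {q : X × X | ∃ y, (q.1, y) ∈ E ∧ (y, q.2) ∈ F} ∈ sets
  inv_mem : ∀ ⦃E⦄, E ∈ sets → {q : X × X | (q.2, q.1) ∈ E} ∈ sets
  subset_mem : ∀ ⦃E F⦄, E ∈ sets → F ⊆ E → F ∈ sets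

/-- Bounded geometry: slices of every entourage have uniformly bounded cardinality. -/
def CoarseStructure.BoundedGeometry {X : Type v} (𝓔 : CoarseStructure X) : Prop :=
  ∀ E ∈ 𝓔.sets, ∃ k : ℕ, ∀ x : X,
    ({y | (x, y) ∈ E}.Finite ∧ {y | (x, y) ∈ E}.ncard ≤ k) ∧
    ({y | (y, x) ∈ E}.Finite ∧ {y | (y, x) ∈ E}.ncard ≤ k)

/-- Connectedness of a coarse structure. -/
def CoarseStructure.Connected {X : Type v} (𝓔 : CoarseStructure X) : Prop :=
  ∀ x y : X, ({(x, y)} : Set (X × X)) ∈ 𝓔.sets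

/-- `𝓔` is the coarse structure generated by the family `S`. -/
def CoarseStructure.IsGeneratedBy {X : Type v} (𝓔 : CoarseStructure X)
    (S : Set (Set (X × X))) : Prop :=
  S ⊆ 𝓔.sets ∧ ∀ 𝓓 : CoarseStructure X, S ⊆ 𝓓.sets → 𝓔.sets ⊆ 𝓓.sets

/-- The uniform Roe algebra of a coarse space. -/
def CoarseRoeAlgebra (X : Type v) (𝓔 : CoarseStructure X) :
    Set (ell2 X →L[ℂ] ell2 X) :=
  closure {a : ell2 X →L[ℂ] ell2 X | opSupport a ∈ 𝓔.sets}

/-! ### The coarse structure attached to a Cartan pair -/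

/-- The set of minimal projections of `B`, as a type. -/
abbrev MinProj (B : Set (H →L[ℂ] H)) : Type u := {p : H →L[ℂ] H // IsMinimalProjIn B p}

/-- The generating entourages `E_{a,ε}` of the coarse structure of a Cartan pair. -/
def cartanEntourages (A B : Set (H →L[ℂ] H)) : Set (Set (MinProj B × MinProj B)) :=
  {E | ∃ a ∈ NormalizerIn A B, ∃ ε : ℝ, 0 < ε ∧
    E = {q : MinProj B × MinProj B |
          ε ≤ ‖(q.1 : H →L[ℂ] H) * a * (q.2 : H →L[ℂ] H)‖}}

/-- Conjugation of an operator on `H` to an operator on `ℓ²(X)` by a unitary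
`u : ℓ²(X) → H`, i.e. `a ↦ u* a u`. -/
def conjDown {X : Type v} (u : ell2 X ≃ₗᵢ[ℂ] H) (a : H →L[ℂ] H) :
    ell2 X →L[ℂ] ell2 X :=
  ((u.symm.toContinuousLinearEquiv : H →L[ℂ] ell2 X).comp a).comp
    (u.toContinuousLinearEquiv : ell2 X →L[ℂ] H)

/-- Conjugation of an operator on `ℓ²(X)` to an operator on `H` by a unitary
`u : ℓ²(X) → H`, i.e. `a ↦ u a u*`. -/
def conjUp {X : Type v} (u : ell2 X ≃ₗᵢ[ℂ] H) (a : ell2 X →L[ℂ] ell2 X) :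
    H →L[ℂ] H :=
  ((u.toContinuousLinearEquiv : ell2 X →L[ℂ] H).comp a).comp
    (u.symm.toContinuousLinearEquiv : H →L[ℂ] ell2 X)

/-! ### Coarse maps -/

/-- A uniformly expansive map between metric spaces. -/
def UniformlyExpansive {X : Type u} {Y : Type v} [MetricSpace X] [MetricSpace Y]
    (f : X → Y) : Prop :=
  ∀ r : ℝ, ∃ s : ℝ, ∀ x x' : X, dist x x' ≤ r → dist (f x) (f x') ≤ s

/-- Two maps into a metric space are close. -/
def Close {X : Type u} {Y : Type v} [MetricSpace Y] (f g : X → Y) : Prop :=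
  ∃ C : ℝ, ∀ x : X, dist (f x) (g x) ≤ C

/-- A coarse equivalence between metric spaces. -/
def IsCoarseEquivalence {X : Type u} {Y : Type v} [MetricSpace X] [MetricSpace Y]
    (f : X → Y) : Prop :=
  UniformlyExpansive f ∧ ∃ g : Y → X, UniformlyExpansive g ∧
    Close (fun x => g (f x)) (fun x => x) ∧ Close (fun y => f (g y)) (fun y => y)

/-- `X` and `Y` are coarsely equivalent. -/
def CoarselyEquivalent (X : Type u) (Y : Type v) [MetricSpace X] [MetricSpace Y] : Prop :=
  ∃ f : X → Y, IsCoarseEquivalence f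

/-- A coarse embedding between metric spaces. -/
def IsCoarseEmbedding {X : Type u} {Y : Type v} [MetricSpace X] [MetricSpace Y]
    (f : X → Y) : Prop :=
  ∃ ρminus ρplus : ℝ → ℝ, Monotone ρminus ∧ Monotone ρplus ∧
    Tendsto ρminus atTop atTop ∧
    ∀ x x' : X, ρminus (dist x x') ≤ dist (f x) (f x') ∧
      dist (f x) (f x') ≤ ρplus (dist x x')

/-- `X` coarsely embeds into a (real) Hilbert space. -/
def CoarselyEmbeddableIntoHilbert (X : Type v) [MetricSpace X] : Prop :=
  ∃ (E : Type) (iE : NormedAddCommGroup E)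
    (_ : @InnerProductSpace ℝ E _ iE.toSeminormedAddCommGroup)
    (_ : @CompleteSpace E iE.toMetricSpace.toPseudoMetricSpace.toUniformSpace)
    (f : X → E),
    @IsCoarseEmbedding X E _ iE.toMetricSpace f

/-- The `r`-boundary of a subset of a metric space (Block–Weinberger). -/
def rBoundary {X : Type v} [MetricSpace X] (r : ℝ) (S : Set X) : Set X :=
  {x : X | (∃ s ∈ S, dist x s ≤ r) ∧ ∃ t ∉ S, dist x t ≤ r}

/-- Amenability in the sense of Block and Weinberger. -/
def BWAmenable (X : Type v) [MetricSpace X] : Prop :=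
  ∀ r > (0 : ℝ), ∀ ε > (0 : ℝ), ∃ S : Set X, S.Finite ∧ S.Nonempty ∧
    ((rBoundary r S).ncard : ℝ) ≤ ε * S.ncard

/-- Yu's property A. -/
def PropertyA (X : Type v) [MetricSpace X] : Prop :=
  ∀ r > (0 : ℝ), ∀ ε > (0 : ℝ), ∃ S > (0 : ℝ), ∃ ξ : X → ell2 X,
    (∀ x : X, ‖ξ x‖ = 1) ∧
    (∀ x y : X, ξ x y ≠ 0 → dist x y ≤ S) ∧
    ∀ x y : X, dist x y ≤ r → ‖ξ x - ξ y‖ ≤ ε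

/-- A *-isomorphism between the uniform Roe algebras of `X` and `Y`. -/
def IsStarIsoBetween (X : Type u) (Y : Type v) [MetricSpace X] [MetricSpace Y]
    (φ : (ell2 X →L[ℂ] ell2 X) → ell2 Y →L[ℂ] ell2 Y) : Prop :=
  Set.BijOn φ (RoeAlgebra X) (RoeAlgebra Y) ∧
  (∀ a ∈ RoeAlgebra X, ∀ b ∈ RoeAlgebra X, φ (a + b) = φ a + φ b) ∧
  (∀ a ∈ RoeAlgebra X, ∀ b ∈ RoeAlgebra X, φ (a * b) = φ a * φ b) ∧
  (∀ (c : ℂ), ∀ a ∈ RoeAlgebra X, φ (c • a) = c • φ a) ∧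
  ∀ a ∈ RoeAlgebra X, φ (star a) = star (φ a)

end RoeCartan

/-!
Choosing unit vectors `eᵢ` in the ranges of the `pᵢ` gives a Hilbert basis with
`pᵢ = |eᵢ⟩⟨eᵢ|`, so an operator is determined by its products with the `pᵢ`. An element `d` of
`W*({pᵢ})` commutes with every `pᵢ`, hence `d pᵢ = μᵢ pᵢ` with `|μᵢ| ≤ ‖d‖`. If `B` is strongly
closed, `d` is the strong limit of the finite sums `∑ μᵢ pᵢ ∈ C*({pᵢ}) ⊆ B`. If `B ≅ ℓ∞(X)`, the
images of the `pᵢ` in `ℓ∞(X)` have disjoint supports, so the bounded function equal to `μᵢ` on the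
`i`-th support pulls back to some `a ∈ B` with `a pᵢ = μᵢ pᵢ` for all `i`, and then `a = d`.
-/

open InnerProductSpace

theorem mem_centralizer_range_of_mul_eq_zero {M I : Type*} [Mul M] [Zero M] {q : I → M}
    (h : ∀ i j, i ≠ j → q i * q j = 0) (i : I) : q i ∈ Set.centralizer (Set.range q) := by
  rintro _ ⟨j, rfl⟩
  obtain rfl | hij := eq_or_ne j i
  · rfl
  · rw [h j i hij, h i j hij.symm]

theorem mul_rankOne_self_of_commute {𝕜 E : Type*} [RCLike 𝕜] [NormedAddCommGroup E]
    [InnerProductSpace 𝕜 E] {e : E} (he : ‖e‖ = 1) {a : E →L[𝕜] E}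
    (ha : Commute (rankOne 𝕜 e e) a) : a * rankOne 𝕜 e e = ⟪e, a e⟫_𝕜 • rankOne 𝕜 e e := by
  have hidem : rankOne 𝕜 e e * rankOne 𝕜 e e = rankOne 𝕜 e e := isIdempotentElem_rankOne_self he
  calc a * rankOne 𝕜 e e = rankOne 𝕜 e e * a * rankOne 𝕜 e e := by
        rw [ha.eq, mul_assoc, hidem]
    _ = ⟪e, a e⟫_𝕜 • rankOne 𝕜 e e := by
        ext v
        simp [smul_smul, mul_comm]

theorem norm_inner_apply_le_opNorm {𝕜 E : Type*} [RCLike 𝕜] [NormedAddCommGroup E]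
    [InnerProductSpace 𝕜 E] {e : E} (he : ‖e‖ = 1) (a : E →L[𝕜] E) : ‖⟪e, a e⟫_𝕜‖ ≤ ‖a‖ :=
  calc ‖⟪e, a e⟫_𝕜‖ ≤ ‖e‖ * ‖a e‖ := norm_inner_le_norm _ _
    _ ≤ ‖a‖ := by simpa [he] using a.le_opNorm e

theorem lp.exists_mul_eq_smul_of_mul_eq_zero {𝕜 X I : Type*} [NormedField 𝕜]
    {χ : I → lp (fun _ : X => 𝕜) ∞} (hχ : ∀ i j, i ≠ j → χ i * χ j = 0) {μ : I → 𝕜}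
    (hμ : BddAbove (Set.range fun i => ‖μ i‖)) :
    ∃ g : lp (fun _ : X => 𝕜) ∞, ∀ i, g * χ i = μ i • χ i := by
  classical
  have hunique : ∀ i j x, χ i x ≠ 0 → χ j x ≠ 0 → i = j := by
    intro i j x hi hj
    by_contra hij
    have h : χ i x * χ j x = 0 := by
      simpa using congrArg (fun f : lp (fun _ : X => 𝕜) ∞ => f x) (hχ i j hij)
    exact mul_ne_zero hi hj h
  obtain ⟨C, hC⟩ := hμ
  let g : X → 𝕜 := fun x => if h : ∃ i, χ i x ≠ 0 then μ h.choose else 0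
  have hg : Memℓp g ∞ := by
    refine memℓp_infty ⟨max C 0, ?_⟩
    rintro _ ⟨x, rfl⟩
    by_cases h : ∃ i, χ i x ≠ 0
    · simpa [g, h] using Or.inl (hC ⟨h.choose, rfl⟩)
    · simp [g, h]
  refine ⟨⟨g, hg⟩, fun i => lp.ext (funext fun x => ?_)⟩
  by_cases hx : χ i x = 0
  · simp [hx]
  · have h : ∃ j, χ j x ≠ 0 := ⟨i, hx⟩
    simp [g, h, hunique _ _ x h.choose_spec hx]

theorem StarAlgEquiv.exists_mul_eq_smul_of_lp {𝕜 A X I : Type*} [RCLike 𝕜]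
    [NonUnitalNonAssocSemiring A] [SMul 𝕜 A] [Star A]
    (φ : A ≃⋆ₐ[𝕜] lp (fun _ : X => 𝕜) ∞) {P : I → A} (hP : ∀ i j, i ≠ j → P i * P j = 0)
    {μ : I → 𝕜} (hμ : BddAbove (Set.range fun i => ‖μ i‖)) :
    ∃ a : A, ∀ i, a * P i = μ i • P i := by
  obtain ⟨g, hg⟩ := lp.exists_mul_eq_smul_of_mul_eq_zero (χ := fun i => φ (P i))
    (fun i j hij => by rw [← map_mul, hP i j hij, map_zero]) hμ
  exact ⟨φ.symm g, fun i => by simpa using congrArg φ.symm (hg i)⟩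

namespace RoeCartan

section

variable {H : Type u} [NormedAddCommGroup H] [InnerProductSpace ℂ H] [CompleteSpace H]

theorem IsProj.exists_eq_rankOne {q : H →L[ℂ] H} (hq : IsProj q) (hq1 : IsRankOne q) :
    ∃ e : H, ‖e‖ = 1 ∧ q = rankOne ℂ e e := by
  obtain ⟨⟨v, t, rfl⟩, hv0, hv⟩ := finrank_eq_one_iff'.mp hq1
  have hqt : q t ≠ 0 := fun h => hv0 (Subtype.ext h)
  set e : H := (‖q t‖⁻¹ : ℂ) • q t
  have he : ‖e‖ = 1 := norm_smul_inv_norm hqt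
  have hqe : q e = e := by
    have hqq : q (q t) = q t := congrArg (fun f : H →L[ℂ] H => f t) hq.1
    simp only [e, map_smul, hqq]
  refine ⟨e, he, ContinuousLinearMap.ext fun w => ?_⟩
  obtain ⟨c, hc⟩ := hv ⟨q w, w, rfl⟩
  have hqw : q w = (c * ‖q t‖) • e := by
    have hc' : q w = c • q t := (congrArg Subtype.val hc).symm
    rw [hc', mul_smul]
    simp [e, smul_smul, hqt]
  have hsymm := ContinuousLinearMap.isSelfAdjoint_iff_isSymmetric.mp hq.2
  calc q w = ⟪e, q w⟫_ℂ • e := by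
          rw [hqw, inner_smul_right, inner_self_eq_norm_sq_to_K, he]; simp
    _ = ⟪e, w⟫_ℂ • e := by rw [← hsymm.apply_clm, hqe]
    _ = rankOne ℂ e e w := rfl

theorem IsCompleteRankOneFamily.exists_hilbertBasis {I : Type v}
    {p : I → H →L[ℂ] H} (hp : IsCompleteRankOneFamily p) :
    ∃ b : HilbertBasis I ℂ H, ∀ i, p i = rankOne ℂ (b i) (b i) := by
  obtain ⟨hproj, horth, hdense⟩ := hp
  choose e he hpe using fun i => (hproj i).1.exists_eq_rankOne (hproj i).2
  have hortho : Orthonormal ℂ e := by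
    refine ⟨he, fun i j hij => ?_⟩
    have h := congrArg (fun f : H →L[ℂ] H => f (e j)) (horth i j hij)
    simp [hpe, mul_apply_eq_comp, inner_self_eq_norm_sq_to_K, he] at h
    exact h.resolve_right (norm_ne_zero_iff.mp (by simp [he i]))
  have hspan : ⊤ ≤ (Submodule.span ℂ (Set.range e)).topologicalClosure := by
    refine (Submodule.dense_iff_topologicalClosure_eq_top.mp (hdense.mono ?_)).ge
    refine SetLike.coe_subset_coe.mpr (iSup_le fun i => ?_)
    rintro _ ⟨w, rfl⟩
    rw [hpe i]
    exact Submodule.smul_mem _ _ (Submodule.subset_span ⟨i, rfl⟩)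
  exact ⟨HilbertBasis.mk hortho hspan, fun i => by rw [HilbertBasis.coe_mk, hpe]⟩

theorem IsCompleteRankOneFamily.isCompleteProjFamily {I : Type v}
    {p : I → H →L[ℂ] H} (hp : IsCompleteRankOneFamily p) : IsCompleteProjFamily p := by
  obtain ⟨b, hb⟩ := hp.exists_hilbertBasis
  refine ⟨fun i => (hp.1 i).1, hp.2.1, fun v => ?_⟩
  simpa [hb, b.repr_apply_apply] using b.hasSum_repr v

theorem IsCompleteProjFamily.tendsto_sum_mul {I : Type v} {q : I → H →L[ℂ] H}
    (hq : IsCompleteProjFamily q) (a : H →L[ℂ] H) :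
    Tendsto (fun s : Finset I => ⇑(∑ i ∈ s, a * q i)) atTop (nhds ⇑a) := by
  refine tendsto_pi_nhds.mpr fun v => ?_
  have h := a.hasSum (hq.2.2 v)
  unfold HasSum at h
  simpa using h

theorem IsCompleteProjFamily.ext {I : Type v} {q : I → H →L[ℂ] H}
    (hq : IsCompleteProjFamily q) {a c : H →L[ℂ] H} (h : ∀ i, a * q i = c * q i) : a = c :=
  DFunLike.coe_injective <|
    tendsto_nhds_unique (hq.tendsto_sum_mul a) (by simpa only [h] using hq.tendsto_sum_mul c)

theorem subset_cstarGen (S : Set (H →L[ℂ] H)) : S ⊆ CstarGen S :=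
  fun _ hx => subset_closure (NonUnitalStarAlgebra.subset_adjoin ℂ S hx)

theorem sum_smul_mem_cstarGen {I : Type*} {S : Set (H →L[ℂ] H)} (s : Finset I) (c : I → ℂ)
    {x : I → H →L[ℂ] H} (hx : ∀ i, x i ∈ S) : ∑ i ∈ s, c i • x i ∈ CstarGen S :=
  subset_closure <| sum_mem fun i _ =>
    SMulMemClass.smul_mem _ (NonUnitalStarAlgebra.subset_adjoin ℂ S (hx i))

end

theorem stmt4_general {H : Type u} [NormedAddCommGroup H] [InnerProductSpace ℂ H] [CompleteSpace H]
    (B : Set (H →L[ℂ] H))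
    {I : Type u} (p : I → H →L[ℂ] H) (hp : IsCompleteRankOneFamily p)
    (h1 : CstarGen (Set.range p) ⊆ B) (h2 : B ⊆ WStar (Set.range p))
    (hyp :
      (∀ a : H →L[ℂ] H,
        (⇑a : H → H) ∈ closure ((fun b : H →L[ℂ] H => (⇑b : H → H)) '' B) → a ∈ B) ∨
      ∃ X : Type u, AbstractlyLinf B X) :
    B = WStar (Set.range p) := by
  obtain ⟨b, hb⟩ := hp.exists_hilbertBasis
  have hq := hp.isCompleteProjFamily
  refine h2.antisymm fun d hd => ?_
  set μ : I → ℂ := fun i => ⟪b i, d (b i)⟫_ℂ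
  have hdp : ∀ i, d * p i = μ i • p i := fun i => by
    have hcomm : Commute (p i) d := hd (p i) (mem_centralizer_range_of_mul_eq_zero hp.2.1 i)
    rw [hb i] at hcomm ⊢
    exact mul_rankOne_self_of_commute (b.orthonormal.1 i) hcomm
  have hpB : ∀ i, p i ∈ B := fun i => h1 (subset_cstarGen _ ⟨i, rfl⟩)
  rcases hyp with hstrong | ⟨X, SB, rfl, ⟨φ⟩⟩
  · refine hstrong d (mem_closure_of_tendsto (hq.tendsto_sum_mul d) (.of_forall fun s => ?_))
    simp only [hdp]
    exact ⟨_, h1 (sum_smul_mem_cstarGen s μ fun i => ⟨i, rfl⟩), rfl⟩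
  · have hμ : BddAbove (Set.range fun i => ‖μ i‖) :=
      ⟨‖d‖, by rintro _ ⟨i, rfl⟩; exact norm_inner_apply_le_opNorm (b.orthonormal.1 i) d⟩
    obtain ⟨a, ha⟩ := φ.exists_mul_eq_smul_of_lp (P := fun i => ⟨p i, hpB i⟩)
      (fun i j hij => Subtype.ext (hp.2.1 i j hij)) hμ
    have had : (a : H →L[ℂ] H) = d :=
      hq.ext fun i => by rw [hdp]; exact congrArg Subtype.val (ha i)
    exact had ▸ a.2

/-- If `C*({pᵢ}) ⊆ B ⊆ W*({pᵢ})` and `B` is either strongly closed or abstractly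
*-isomorphic to some `ℓ∞(X)`, then `B = W*({pᵢ})`. -/
theorem stmt4 {H : Type u} [NormedAddCommGroup H] [InnerProductSpace ℂ H] [CompleteSpace H]
    (B : Set (H →L[ℂ] H)) (hB : IsCstarSubalgebra B)
    {I : Type u} (p : I → H →L[ℂ] H) (hp : IsCompleteRankOneFamily p)
    (h1 : CstarGen (Set.range p) ⊆ B) (h2 : B ⊆ WStar (Set.range p))
    (hyp :
      (∀ a : H →L[ℂ] H,
        (⇑a : H → H) ∈ closure ((fun b : H →L[ℂ] H => (⇑b : H → H)) '' B) → a ∈ B) ∨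
      ∃ X : Type u, AbstractlyLinf B X) :
    B = WStar (Set.range p) :=
  stmt4_general B p hp h1 h2 hyp

end RoeCartan
end
end

section
/- Let (X,𝓔) be a bounded geometry coarse space. For each E ∈ 𝓔 meeting each row and each column of X × X at most once, let v^E be the bounded operator on ℓ²(X) whose matrix has (x,y)-entry 1 if (x,y) ∈ E and 0 otherwise. Then each such v^E is a partial isometry of finite propagation (i.e. lying in ℂ_u[X;𝓔]) which normalises ℓ∞(X). Moreover, if S ⊆ 𝓔 is a collection of subsets of X × X, each meeting each row and column at most once, which generates the coarse structure 𝓔, then the set {v^E : E ∈ S} ∪ ℓ∞(X) generates ℂ_u[X;𝓔] as a *-algebra, and hence generates C*_u(X;𝓔) as a C*-algebra. -/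
/- Common definitions for formalising "Cartan subalgebras of uniform Roe algebras"
   (White–Willett).  We model C*-subalgebras of B(H) as norm-closed sets of
   continuous linear operators underlying non-unital star subalgebras. -/

open scoped InnerProductSpace ENNReal
open Filter

noncomputable section

universe u v

namespace RoeCartan

/-!
For a partial bijection `T ⊆ X × X`, write `σ x` for the unique `y` with `(x, y) ∈ T`. The
operator `v^T` is `ξ ↦ 1_{dom T} · (ξ ∘ σ)`, bounded because `σ` is injective on `dom T`.
The support calculus `supp (a b) ⊆ supp a ∘ supp b`, `supp a* = (supp a)⁻¹` gives
`v^T v^{T'} = v^{T ∘ T'}` and `(v^T)* = v^{T⁻¹}`, hence `v^T` is a partial isometry normalising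
the diagonal operators `ℓ∞(X)`.

For generation, let `A` be the *-algebra generated by the `v^E` (`E ∈ S`) and `ℓ∞(X)`. The sets
covered by finitely many partial bijections `T` with `v^T ∈ A` form a coarse structure containing
`S`, hence containing every entourage of `𝓔`. An operator `a` supported in `T₁ ∪ ⋯ ∪ Tₙ` is
`∑ fᵢ v^{Tᵢ}` for bounded functions `fᵢ` read off the matrix of `a`, so it lies in `A`.
-/

open scoped SetRel ComplexConjugate NNReal

variable {X : Type u}

section MatrixEntries

lemma delta_apply_self (x : X) : (delta x : ell2 X) x = 1 := by
  classical
  simp [delta]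

lemma delta_apply_of_ne {x y : X} (h : y ≠ x) : (delta x : ell2 X) y = 0 := by
  classical
  simp [delta, lp.single_apply, h]

lemma inner_delta_left (x : X) (f : ell2 X) : ⟪delta x, f⟫_ℂ = f x := by
  classical
  simp [delta, lp.inner_single_left]

lemma norm_delta (x : X) : ‖(delta x : ell2 X)‖ = 1 := by
  classical
  simp [delta, lp.norm_single]

lemma norm_matEntry_le (a : ell2 X →L[ℂ] ell2 X) (x y : X) : ‖matEntry a x y‖ ≤ ‖a‖ :=
  calc ‖matEntry a x y‖ ≤ ‖a (delta y)‖ := lp.norm_apply_le_norm two_ne_zero _ x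
    _ ≤ ‖a‖ * ‖(delta y : ell2 X)‖ := a.le_opNorm _
    _ = ‖a‖ := by rw [norm_delta, mul_one]

lemma ext_delta {E : Type*} [NormedAddCommGroup E] [NormedSpace ℂ E]
    {φ ψ : ell2 X →L[ℂ] E} (h : ∀ y, φ (delta y) = ψ (delta y)) : φ = ψ := by
  classical
  refine lp.ext_continuousLinearMap ENNReal.ofNat_ne_top fun y => ?_
  refine ContinuousLinearMap.ext_ring ?_
  simpa [delta] using h y

lemma ext_matEntry {a b : ell2 X →L[ℂ] ell2 X}
    (h : ∀ x y, matEntry a x y = matEntry b x y) : a = b :=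
  ext_delta fun y => lp.ext <| funext fun x => h x y

@[simp]
lemma matEntry_add (a b : ell2 X →L[ℂ] ell2 X) (x y : X) :
    matEntry (a + b) x y = matEntry a x y + matEntry b x y := rfl

@[simp]
lemma matEntry_smul (c : ℂ) (a : ell2 X →L[ℂ] ell2 X) (x y : X) :
    matEntry (c • a) x y = c * matEntry a x y := rfl

@[simp]
lemma matEntry_zero (x y : X) : matEntry (0 : ell2 X →L[ℂ] ell2 X) x y = 0 := rfl

lemma matEntry_sum {ι : Type*} (s : Finset ι) (a : ι → ell2 X →L[ℂ] ell2 X) (x y : X) :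
    matEntry (∑ i ∈ s, a i) x y = ∑ i ∈ s, matEntry (a i) x y :=
  map_sum ((lp.evalCLM ℂ (fun _ : X => ℂ) 2 x).comp
    (ContinuousLinearMap.apply ℂ (ell2 X) (delta y))) a s

lemma matEntry_eq_inner (a : ell2 X →L[ℂ] ell2 X) (x y : X) :
    matEntry a x y = ⟪delta x, a (delta y)⟫_ℂ :=
  (inner_delta_left x _).symm

lemma matEntry_star (a : ell2 X →L[ℂ] ell2 X) (x y : X) :
    matEntry (star a) x y = conj (matEntry a y x) := by
  rw [matEntry_eq_inner, ContinuousLinearMap.star_eq_adjoint,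
    ContinuousLinearMap.adjoint_inner_right, matEntry_eq_inner, inner_conj_symm]

lemma matEntry_mul (a b : ell2 X →L[ℂ] ell2 X) (x y : X) :
    matEntry (a * b) x y = ∑' z, matEntry a x z * matEntry b z y := by
  rw [matEntry_eq_inner, mul_apply_eq_comp,
    ← ContinuousLinearMap.adjoint_inner_left, ← ContinuousLinearMap.star_eq_adjoint,
    lp.inner_eq_tsum]
  congr 1 with z
  rw [RCLike.inner_apply']
  change conj (matEntry (star a) z x) * matEntry b z y = _
  rw [matEntry_star, Complex.conj_conj]

end MatrixEntries

section Support

lemma opSupport_star (a : ell2 X →L[ℂ] ell2 X) :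
    opSupport (star a) = SetRel.inv (opSupport a) := by
  ext ⟨x, y⟩
  simp [opSupport, matEntry_star]

lemma opSupport_mul_subset (a b : ell2 X →L[ℂ] ell2 X) :
    opSupport (a * b) ⊆ opSupport a ○ opSupport b := by
  intro ⟨x, y⟩ hxy
  by_contra hcomp
  have hterm (z : X) : matEntry a x z * matEntry b z y = 0 := by
    by_contra h
    exact hcomp ⟨z, left_ne_zero_of_mul h, right_ne_zero_of_mul h⟩
  exact hxy (by simp [matEntry_mul, hterm])

lemma opSupport_add_subset (a b : ell2 X →L[ℂ] ell2 X) :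
    opSupport (a + b) ⊆ opSupport a ∪ opSupport b := by
  intro ⟨x, y⟩ h
  by_contra hab
  simp_all [opSupport]

lemma opSupport_smul_subset (c : ℂ) (a : ell2 X →L[ℂ] ell2 X) :
    opSupport (c • a) ⊆ opSupport a := by
  intro ⟨x, y⟩ h
  simp_all [opSupport]

@[simp]
lemma opSupport_zero : opSupport (0 : ell2 X →L[ℂ] ell2 X) = ∅ := by
  ext ⟨x, y⟩
  simp [opSupport]

lemma isDiagonalOp_iff_opSupport_subset {a : ell2 X →L[ℂ] ell2 X} :
    IsDiagonalOp a ↔ opSupport a ⊆ SetRel.id := by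
  constructor
  · rintro ⟨f, hf⟩ ⟨x, y⟩ hxy
    by_contra hne
    exact hxy (by rw [matEntry, hf, delta_apply_of_ne hne, mul_zero])
  · intro ha
    refine ⟨fun x => matEntry a x x, fun ξ x => ?_⟩
    have key : (lp.evalCLM ℂ (fun _ : X => ℂ) 2 x).comp a =
        matEntry a x x • lp.evalCLM ℂ (fun _ : X => ℂ) 2 x := by
      refine ext_delta fun y => ?_
      obtain rfl | hne := eq_or_ne x y
      · simp [lp.evalCLM, delta_apply_self, matEntry]
      · have : matEntry a x y = 0 := not_not.1 fun h => hne (ha (a := (x, y)) h)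
        simpa [lp.evalCLM, delta_apply_of_ne hne, matEntry] using this
    simpa [lp.evalCLM] using congr($key ξ)

end Support

section PartialBijection

def IsPartialBijection (T : SetRel X X) : Prop :=
  ∀ x, {y | (x, y) ∈ T}.Subsingleton ∧ {y | (y, x) ∈ T}.Subsingleton

namespace IsPartialBijection

variable {T T' : SetRel X X}

lemma inv (hT : IsPartialBijection T) : IsPartialBijection T.inv :=
  fun x => ⟨(hT x).2, (hT x).1⟩

lemma comp (hT : IsPartialBijection T) (hT' : IsPartialBijection T') :
    IsPartialBijection (T ○ T') := by
  refine fun x => ⟨?_, ?_⟩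
  · rintro y ⟨z, hxz, hzy⟩ y' ⟨z', hxz', hzy'⟩
    obtain rfl := (hT x).1 hxz hxz'
    exact (hT' z).1 hzy hzy'
  · rintro y ⟨z, hyz, hzx⟩ y' ⟨z', hyz', hzx'⟩
    obtain rfl := (hT' x).2 hzx hzx'
    exact (hT z).2 hyz hyz'

lemma comp_inv_subset_id (hT : IsPartialBijection T) : T ○ T.inv ⊆ SetRel.id := by
  rintro ⟨x, y⟩ ⟨z, hxz, hyz⟩
  exact (hT z).2 hxz hyz

lemma comp_inv_comp (hT : IsPartialBijection T) : T ○ T.inv ○ T = T := by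
  ext ⟨x, y⟩
  constructor
  · rintro ⟨z, hxz, hzy⟩
    rwa [hT.comp_inv_subset_id hxz]
  · exact fun hxy => ⟨x, ⟨y, hxy, hxy⟩, hxy⟩

end IsPartialBijection

lemma isDiagonalOp_mul_mul_star {T : SetRel X X} (hT : IsPartialBijection T)
    {a b : ell2 X →L[ℂ] ell2 X} (ha : opSupport a ⊆ T) (hb : IsDiagonalOp b) :
    IsDiagonalOp (a * b * star a) := by
  rw [isDiagonalOp_iff_opSupport_subset] at hb ⊢
  refine (opSupport_mul_subset _ _).trans (subset_trans ?_ hT.comp_inv_subset_id)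
  rw [opSupport_star]
  rintro ⟨x, y⟩ ⟨z, hxz, hzy⟩
  obtain ⟨w, hxw, hwz⟩ := opSupport_mul_subset _ _ hxz
  obtain rfl : w = z := hb hwz
  exact ⟨w, ha hxw, ha hzy⟩

lemma isDiagonalOp_conj {T : SetRel X X} (hT : IsPartialBijection T)
    {a b : ell2 X →L[ℂ] ell2 X} (ha : opSupport a ⊆ T) (hb : IsDiagonalOp b) :
    IsDiagonalOp (a * b * star a) ∧ IsDiagonalOp (star a * b * a) := by
  refine ⟨isDiagonalOp_mul_mul_star hT ha hb, ?_⟩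
  have ha' : opSupport (star a) ⊆ T.inv := by
    rw [opSupport_star]
    exact SetRel.inv_mono ha
  simpa using isDiagonalOp_mul_mul_star hT.inv ha' hb

def HasIndicatorMatrix (T : SetRel X X) (a : ell2 X →L[ℂ] ell2 X) : Prop :=
  ∀ x y, matEntry a x y = T.indicator (fun _ => (1 : ℂ)) (x, y)

namespace HasIndicatorMatrix

variable {T T' : SetRel X X} {a b : ell2 X →L[ℂ] ell2 X}

lemma opSupport_eq (ha : HasIndicatorMatrix T a) : opSupport a = T := by
  ext ⟨x, y⟩
  simp [opSupport, ha x y]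

lemma unique (ha : HasIndicatorMatrix T a) (hb : HasIndicatorMatrix T b) : a = b :=
  ext_matEntry fun x y => by rw [ha, hb]

lemma adjoint (ha : HasIndicatorMatrix T a) : HasIndicatorMatrix T.inv (star a) := by
  intro x y
  rw [matEntry_star, ha]
  by_cases h : (y, x) ∈ T <;> simp [h]

lemma mul (hT : IsPartialBijection T) (ha : HasIndicatorMatrix T a)
    (hb : HasIndicatorMatrix T' b) : HasIndicatorMatrix (T ○ T') (a * b) := by
  intro x y
  rw [matEntry_mul]
  by_cases hxy : (x, y) ∈ T ○ T'
  · obtain ⟨z, hxz, hzy⟩ := id hxy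
    rw [Set.indicator_of_mem hxy, tsum_eq_single z, ha, hb, Set.indicator_of_mem hxz,
      Set.indicator_of_mem hzy, one_mul]
    intro z' hz'
    rw [ha, Set.indicator_of_notMem (show (x, z') ∉ T from fun h => hz' ((hT x).1 h hxz)),
      zero_mul]
  · rw [Set.indicator_of_notMem hxy]
    refine (tsum_congr fun z => ?_).trans tsum_zero
    rw [ha, hb]
    by_cases hxz : (x, z) ∈ T
    · rw [Set.indicator_of_notMem fun hzy => hxy ⟨z, hxz, hzy⟩, mul_zero]
    · rw [Set.indicator_of_notMem hxz, zero_mul]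

end HasIndicatorMatrix

lemma HasIndicatorMatrix.mul_star_mul {T : SetRel X X} {a : ell2 X →L[ℂ] ell2 X}
    (hT : IsPartialBijection T) (ha : HasIndicatorMatrix T a) :
    a * star a * a = a := by
  have h := ((ha.mul hT ha.adjoint).mul (hT.comp hT.inv) ha)
  rw [hT.comp_inv_comp] at h
  exact h.unique ha

end PartialBijection

section WeightedComposition

variable {f : X → ℂ} {σ : X → X} {C : ℝ≥0}

lemma sum_norm_rpow_mul_comp_le (hf : ∀ x, ‖f x‖ ≤ C) (hσ : Set.InjOn σ (Function.support f))
    (ξ : ell2 X) (s : Finset X) :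
    ∑ x ∈ s, ‖f x * ξ (σ x)‖ ^ (2 : ℝ≥0∞).toReal ≤ (C * ‖ξ‖) ^ (2 : ℝ≥0∞).toReal := by
  classical
  set p : ℝ := (2 : ℝ≥0∞).toReal
  have hp : 0 < p := by norm_num [p]
  set s' := s.filter (f · ≠ 0)
  calc ∑ x ∈ s, ‖f x * ξ (σ x)‖ ^ p = ∑ x ∈ s', ‖f x * ξ (σ x)‖ ^ p := by
        refine (Finset.sum_filter_of_ne fun x _ h => ?_).symm
        rintro hfx
        simp [hfx, Real.zero_rpow hp.ne'] at h
    _ ≤ ∑ x ∈ s', (C : ℝ) ^ p * ‖ξ (σ x)‖ ^ p := by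
        gcongr with x
        rw [norm_mul, Real.mul_rpow (norm_nonneg _) (norm_nonneg _)]
        gcongr
        exact hf x
    _ = (C : ℝ) ^ p * ∑ y ∈ s'.image σ, ‖ξ y‖ ^ p := by
        have hinj : Set.InjOn σ s' := fun x hx y hy =>
          hσ (Finset.mem_filter.1 hx).2 (Finset.mem_filter.1 hy).2
        rw [Finset.mul_sum, Finset.sum_image hinj]
    _ ≤ (C : ℝ) ^ p * ‖ξ‖ ^ p := by
        gcongr
        exact lp.sum_rpow_le_norm_rpow hp ξ _
    _ = (C * ‖ξ‖) ^ p := (Real.mul_rpow C.2 (norm_nonneg _)).symm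

variable (f σ C) in
def weightedCompOp (hf : ∀ x, ‖f x‖ ≤ C) (hσ : Set.InjOn σ (Function.support f)) :
    ell2 X →L[ℂ] ell2 X :=
  LinearMap.mkContinuous
    { toFun := fun ξ =>
        ⟨fun x => f x * ξ (σ x), memℓp_gen' (sum_norm_rpow_mul_comp_le hf hσ ξ)⟩
      map_add' := fun ξ η => lp.ext <| funext fun x => mul_add _ _ _
      map_smul' := fun c ξ => lp.ext <| funext fun x => mul_left_comm _ _ _ }
    C fun ξ => lp.norm_le_of_forall_sum_le (by norm_num) (by positivity)
      (sum_norm_rpow_mul_comp_le hf hσ ξ)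

lemma weightedCompOp_apply (hf : ∀ x, ‖f x‖ ≤ C) (hσ : Set.InjOn σ (Function.support f))
    (ξ : ell2 X) (x : X) : weightedCompOp f σ C hf hσ ξ x = f x * ξ (σ x) := rfl

end WeightedComposition

lemma IsPartialBijection.exists_hasIndicatorMatrix {T : SetRel X X}
    (hT : IsPartialBijection T) : ∃ v, HasIndicatorMatrix T v := by
  classical
  choose! σ hσ using fun x (hx : x ∈ T.dom) => hx
  have hσT {x y : X} (hx : x ∈ T.dom) : (x, y) ∈ T ↔ σ x = y :=
    ⟨fun h => (hT x).1 (hσ x hx) h, fun h => h ▸ hσ x hx⟩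
  have hf (x : X) : ‖T.dom.indicator (fun _ => (1 : ℂ)) x‖ ≤ (1 : ℝ≥0) := by
    by_cases hx : x ∈ T.dom <;> simp [hx]
  have hinj : Set.InjOn σ (Function.support (T.dom.indicator fun _ => (1 : ℂ))) := by
    intro x hx x' hx' h
    have hxT := (Set.indicator_apply_ne_zero.1 hx).1
    exact (hT (σ x)).2 (hσ x hxT) (h ▸ hσ x' (Set.indicator_apply_ne_zero.1 hx').1)
  refine ⟨weightedCompOp _ σ 1 hf hinj, fun x y => ?_⟩
  rw [matEntry, weightedCompOp_apply]
  by_cases hx : x ∈ T.dom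
  · by_cases hxy : σ x = y
    · subst hxy
      simp [hx, hσ x hx, delta_apply_self]
    · simp [hx, (hσT hx).not.2 hxy, delta_apply_of_ne hxy]
  · have hxy : (x, y) ∉ T := fun h => hx ⟨y, h⟩
    simp [hx, hxy]

section Covering

lemma mem_of_opSupport_subset_iUnion (A : NonUnitalStarSubalgebra ℂ (ell2 X →L[ℂ] ell2 X))
    (hA : LinfOps X ⊆ A) {ι : Type*} [Finite ι] {G : ι → SetRel X X}
    (hG : ∀ i, IsPartialBijection (G i)) (hGA : ∀ i, ∃ g ∈ A, HasIndicatorMatrix (G i) g)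
    {a : ell2 X →L[ℂ] ell2 X} (ha : opSupport a ⊆ ⋃ i, G i) : a ∈ A := by
  classical
  obtain _ | _ := isEmpty_or_nonempty ι
  · have ha0 : a = 0 := ext_matEntry fun x y => by
      by_contra h
      simpa using ha (a := (x, y)) h
    exact ha0 ▸ zero_mem A
  have := Fintype.ofFinite ι
  choose g hgA hg using hGA
  choose! col hcol using fun q (hq : q ∈ opSupport a) => Set.mem_iUnion.1 (ha hq)
  choose! σ hσ using fun i x (hx : x ∈ (G i).dom) => hx
  set f : ι → X → ℂ := fun i x =>
    if (x, σ i x) ∈ G i ∧ col (x, σ i x) = i then matEntry a x (σ i x) else 0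
  have hf (i : ι) (x : X) : ‖f i x‖ ≤ ‖a‖₊ := by
    dsimp only [f]
    split_ifs
    · exact norm_matEntry_le a x _
    · simp
  set m : ι → ell2 X →L[ℂ] ell2 X := fun i =>
    weightedCompOp (f i) id ‖a‖₊ (hf i) (Set.injOn_id _)
  have hterm (i : ι) (x y : X) : matEntry (m i * g i) x y =
      if (x, y) ∈ G i ∧ col (x, y) = i then matEntry a x y else 0 := by
    change f i x * matEntry (g i) x y = _
    rw [hg i x y]
    by_cases hxy : (x, y) ∈ G i
    · obtain rfl : σ i x = y := (hG i x).1 (hσ i x ⟨y, hxy⟩) hxy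
      simp [f, hxy]
    · simp [hxy]
  have hsum : a = ∑ i, m i * g i := by
    refine ext_matEntry fun x y => ?_
    simp only [matEntry_sum, hterm]
    by_cases hxy : (x, y) ∈ opSupport a
    · rw [Finset.sum_eq_single_of_mem (col (x, y)) (Finset.mem_univ _)
        fun i _ hi => if_neg fun h => hi h.2.symm, if_pos ⟨hcol _ hxy, rfl⟩]
    · simp [not_not.1 hxy]
  rw [hsum]
  exact sum_mem fun i _ => mul_mem (hA ⟨f i, fun _ _ => rfl⟩) (hgA i)

variable (A : NonUnitalStarSubalgebra ℂ (ell2 X →L[ℂ] ell2 X))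

def CoveredByTranslationsIn (E : SetRel X X) : Prop :=
  ∃ (ι : Type) (_ : Finite ι) (G : ι → SetRel X X),
    (∀ i, IsPartialBijection (G i) ∧ ∃ g ∈ A, HasIndicatorMatrix (G i) g) ∧ E ⊆ ⋃ i, G i

variable {A}

lemma IsPartialBijection.coveredByTranslationsIn {T : SetRel X X} (hT : IsPartialBijection T)
    (hTA : ∃ g ∈ A, HasIndicatorMatrix T g) : CoveredByTranslationsIn A T :=
  ⟨Unit, inferInstance, fun _ => T, fun _ => ⟨hT, hTA⟩, fun _ hq => Set.mem_iUnion.2 ⟨(), hq⟩⟩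

lemma coveredByTranslationsIn_id (hA : LinfOps X ⊆ A) :
    CoveredByTranslationsIn A (SetRel.id : SetRel X X) := by
  have hid : IsPartialBijection (SetRel.id : SetRel X X) := fun x =>
    ⟨fun y hy y' hy' => hy.symm.trans hy', fun y hy y' hy' => hy.trans hy'.symm⟩
  obtain ⟨v, hv⟩ := hid.exists_hasIndicatorMatrix
  exact hid.coveredByTranslationsIn
    ⟨v, hA (isDiagonalOp_iff_opSupport_subset.2 hv.opSupport_eq.le), hv⟩

namespace CoveredByTranslationsIn

variable {E F : SetRel X X}

lemma mono (hE : CoveredByTranslationsIn A E) (hFE : F ⊆ E) : CoveredByTranslationsIn A F :=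
  let ⟨ι, hι, G, hG, hEG⟩ := hE
  ⟨ι, hι, G, hG, hFE.trans hEG⟩

lemma union (hE : CoveredByTranslationsIn A E) (hF : CoveredByTranslationsIn A F) :
    CoveredByTranslationsIn A (E ∪ F) := by
  obtain ⟨ι, hι, G, hG, hEG⟩ := hE
  obtain ⟨κ, hκ, G', hG', hFG'⟩ := hF
  refine ⟨ι ⊕ κ, inferInstance, Sum.elim G G', Sum.forall.2 ⟨hG, hG'⟩, ?_⟩
  rintro q (hq | hq)
  · obtain ⟨i, hi⟩ := Set.mem_iUnion.1 (hEG hq)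
    exact Set.mem_iUnion.2 ⟨.inl i, hi⟩
  · obtain ⟨j, hj⟩ := Set.mem_iUnion.1 (hFG' hq)
    exact Set.mem_iUnion.2 ⟨.inr j, hj⟩

lemma inv (hE : CoveredByTranslationsIn A E) : CoveredByTranslationsIn A E.inv := by
  obtain ⟨ι, hι, G, hG, hEG⟩ := hE
  refine ⟨ι, hι, fun i => (G i).inv, fun i => ⟨(hG i).1.inv, ?_⟩, fun q hq => ?_⟩
  · obtain ⟨g, hgA, hg⟩ := (hG i).2
    exact ⟨star g, star_mem hgA, hg.adjoint⟩
  · obtain ⟨i, hi⟩ := Set.mem_iUnion.1 (hEG hq)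
    exact Set.mem_iUnion.2 ⟨i, hi⟩

lemma comp (hE : CoveredByTranslationsIn A E) (hF : CoveredByTranslationsIn A F) :
    CoveredByTranslationsIn A (E ○ F) := by
  obtain ⟨ι, hι, G, hG, hEG⟩ := hE
  obtain ⟨κ, hκ, G', hG', hFG'⟩ := hF
  refine ⟨ι × κ, inferInstance, fun p => G p.1 ○ G' p.2,
    fun p => ⟨(hG p.1).1.comp (hG' p.2).1, ?_⟩, ?_⟩
  · obtain ⟨g, hgA, hg⟩ := (hG p.1).2
    obtain ⟨g', hgA', hg'⟩ := (hG' p.2).2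
    exact ⟨g * g', mul_mem hgA hgA', hg.mul (hG p.1).1 hg'⟩
  · rintro ⟨x, y⟩ ⟨z, hxz, hzy⟩
    obtain ⟨i, hi⟩ := Set.mem_iUnion.1 (hEG hxz)
    obtain ⟨j, hj⟩ := Set.mem_iUnion.1 (hFG' hzy)
    exact Set.mem_iUnion.2 ⟨(i, j), z, hi, hj⟩

end CoveredByTranslationsIn

variable (A) in
def translationCoarseStructure (hA : LinfOps X ⊆ A) : CoarseStructure X where
  sets := {E | CoveredByTranslationsIn A E}
  diag_mem := coveredByTranslationsIn_id hA
  union_mem _ _ hE hF := hE.union hF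
  comp_mem _ _ hE hF := hE.comp hF
  inv_mem _ hE := hE.inv
  subset_mem _ _ hE hFE := hE.mono hFE

lemma mem_of_coveredByTranslationsIn_opSupport (hA : LinfOps X ⊆ A)
    {a : ell2 X →L[ℂ] ell2 X} (ha : CoveredByTranslationsIn A (opSupport a)) : a ∈ A :=
  let ⟨_, _, _, hG, haG⟩ := ha
  mem_of_opSupport_subset_iUnion A hA (fun i => (hG i).1) (fun i => (hG i).2) haG

end Covering

def algebraicRoe (𝓔 : CoarseStructure X) :
    NonUnitalStarSubalgebra ℂ (ell2 X →L[ℂ] ell2 X) where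
  carrier := {a | opSupport a ∈ 𝓔.sets}
  add_mem' ha hb := 𝓔.subset_mem (𝓔.union_mem ha hb) (opSupport_add_subset _ _)
  zero_mem' := 𝓔.subset_mem 𝓔.diag_mem (by simp)
  mul_mem' ha hb := 𝓔.subset_mem (𝓔.comp_mem ha hb) (opSupport_mul_subset _ _)
  smul_mem' c a ha := 𝓔.subset_mem ha (opSupport_smul_subset c a)
  star_mem' {a} ha := by
    change opSupport (star a) ∈ 𝓔.sets
    rw [opSupport_star]
    exact 𝓔.inv_mem ha

lemma adjoin_translations_union_linfOps_eq {𝓔 : CoarseStructure X} {S : Set (SetRel X X)}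
    (hS : ∀ E ∈ S, IsPartialBijection E) (hgen : 𝓔.IsGeneratedBy S) :
    (NonUnitalStarAlgebra.adjoin ℂ ({a | ∃ E ∈ S, HasIndicatorMatrix E a} ∪ LinfOps X) :
      Set (ell2 X →L[ℂ] ell2 X)) = algebraicRoe 𝓔 := by
  set A := NonUnitalStarAlgebra.adjoin ℂ ({a | ∃ E ∈ S, HasIndicatorMatrix E a} ∪ LinfOps X)
  refine le_antisymm (NonUnitalStarAlgebra.adjoin_le ?_) fun a ha => ?_
  · rintro a (⟨E, hES, ha⟩ | ha)
    · change opSupport a ∈ 𝓔.sets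
      exact ha.opSupport_eq ▸ hgen.1 hES
    · exact 𝓔.subset_mem 𝓔.diag_mem (isDiagonalOp_iff_opSupport_subset.1 ha)
  · have hA : LinfOps X ⊆ A := fun b hb => NonUnitalStarAlgebra.subset_adjoin ℂ _ (.inr hb)
    have hS_covered : S ⊆ (translationCoarseStructure A hA).sets := fun E hE => by
      obtain ⟨g, hg⟩ := (hS E hE).exists_hasIndicatorMatrix
      exact (hS E hE).coveredByTranslationsIn
        ⟨g, NonUnitalStarAlgebra.subset_adjoin ℂ _ (.inl ⟨E, hE, hg⟩), hg⟩
    exact mem_of_coveredByTranslationsIn_opSupport hA (hgen.2 _ hS_covered ha)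

theorem stmt7_general {X : Type u} (𝓔 : CoarseStructure X) :
    (∀ E ∈ 𝓔.sets,
      (∀ x : X, {y : X | (x, y) ∈ E}.Subsingleton ∧ {y : X | (y, x) ∈ E}.Subsingleton) →
      (∃ a : ell2 X →L[ℂ] ell2 X,
        ∀ x y : X, matEntry a x y = E.indicator (fun _ => (1 : ℂ)) (x, y)) ∧
      ∀ a : ell2 X →L[ℂ] ell2 X,
        (∀ x y : X, matEntry a x y = E.indicator (fun _ => (1 : ℂ)) (x, y)) →
        a * star a * a = a ∧ opSupport a ∈ 𝓔.sets ∧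
        ∀ b ∈ LinfOps X, a * b * star a ∈ LinfOps X ∧ star a * b * a ∈ LinfOps X) ∧
    ∀ S : Set (Set (X × X)),
      (∀ E ∈ S, ∀ x : X,
        {y : X | (x, y) ∈ E}.Subsingleton ∧ {y : X | (y, x) ∈ E}.Subsingleton) →
      𝓔.IsGeneratedBy S →
      ((NonUnitalStarAlgebra.adjoin ℂ
          ({a : ell2 X →L[ℂ] ell2 X |
              ∃ E ∈ S, ∀ x y : X, matEntry a x y = E.indicator (fun _ => (1 : ℂ)) (x, y)}
            ∪ LinfOps X) :
          NonUnitalStarSubalgebra ℂ (ell2 X →L[ℂ] ell2 X)) : Set (ell2 X →L[ℂ] ell2 X))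
        = {a : ell2 X →L[ℂ] ell2 X | opSupport a ∈ 𝓔.sets} ∧
      CstarGen
          ({a : ell2 X →L[ℂ] ell2 X |
              ∃ E ∈ S, ∀ x y : X, matEntry a x y = E.indicator (fun _ => (1 : ℂ)) (x, y)}
            ∪ LinfOps X)
        = CoarseRoeAlgebra X 𝓔 := by
  refine ⟨fun E hE hEpb => ⟨IsPartialBijection.exists_hasIndicatorMatrix hEpb, ?_⟩, ?_⟩
  · intro a (ha : HasIndicatorMatrix E a)
    exact ⟨ha.mul_star_mul hEpb, ha.opSupport_eq ▸ hE,
      fun b hb => isDiagonalOp_conj hEpb ha.opSupport_eq.le hb⟩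
  · intro S hS hgen
    have h := adjoin_translations_union_linfOps_eq hS hgen
    exact ⟨h, congrArg closure h⟩

/-- The partial isometries `v^E` lie in `ℂ_u[X;𝓔]`, normalise `ℓ∞(X)`, and
(for `S` generating `𝓔`) together with `ℓ∞(X)` generate `ℂ_u[X;𝓔]` as a *-algebra, hence
`C*_u(X;𝓔)` as a C*-algebra. -/
theorem stmt7 {X : Type u} (𝓔 : CoarseStructure X) (hbg : 𝓔.BoundedGeometry) :
    (∀ E ∈ 𝓔.sets,
      (∀ x : X, {y : X | (x, y) ∈ E}.Subsingleton ∧ {y : X | (y, x) ∈ E}.Subsingleton) →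
      (∃ a : ell2 X →L[ℂ] ell2 X,
        ∀ x y : X, matEntry a x y = E.indicator (fun _ => (1 : ℂ)) (x, y)) ∧
      ∀ a : ell2 X →L[ℂ] ell2 X,
        (∀ x y : X, matEntry a x y = E.indicator (fun _ => (1 : ℂ)) (x, y)) →
        a * star a * a = a ∧ opSupport a ∈ 𝓔.sets ∧
        ∀ b ∈ LinfOps X, a * b * star a ∈ LinfOps X ∧ star a * b * a ∈ LinfOps X) ∧
    ∀ S : Set (Set (X × X)),
      (∀ E ∈ S, ∀ x : X,
        {y : X | (x, y) ∈ E}.Subsingleton ∧ {y : X | (y, x) ∈ E}.Subsingleton) →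
      𝓔.IsGeneratedBy S →
      ((NonUnitalStarAlgebra.adjoin ℂ
          ({a : ell2 X →L[ℂ] ell2 X |
              ∃ E ∈ S, ∀ x y : X, matEntry a x y = E.indicator (fun _ => (1 : ℂ)) (x, y)}
            ∪ LinfOps X) :
          NonUnitalStarSubalgebra ℂ (ell2 X →L[ℂ] ell2 X)) : Set (ell2 X →L[ℂ] ell2 X))
        = {a : ell2 X →L[ℂ] ell2 X | opSupport a ∈ 𝓔.sets} ∧
      CstarGen
          ({a : ell2 X →L[ℂ] ell2 X |
              ∃ E ∈ S, ∀ x y : X, matEntry a x y = E.indicator (fun _ => (1 : ℂ)) (x, y)}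
            ∪ LinfOps X)
        = CoarseRoeAlgebra X 𝓔 :=
  stmt7_general 𝓔

end RoeCartan
end
end

section
/- Let H be a Hilbert space, let A ⊆ B(H) be a unital C*-subalgebra containing all compact operators K(H), and let B ⊆ A be a Cartan subalgebra which is abstractly *-isomorphic to ℓ∞(I) for some set I. Then for every a ∈ N_A(B) and every ε > 0 there exist f ∈ B and a partial isometry v ∈ A with vBv* ∪ v*Bv ⊆ B such that ‖a − f v‖ ≤ ε. -/
/- Common definitions for formalising "Cartan subalgebras of uniform Roe algebras"
   (White–Willett).  We model C*-subalgebras of B(H) as norm-closed sets of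
   continuous linear operators underlying non-unital star subalgebras. -/

open scoped InnerProductSpace ENNReal
open Filter

noncomputable section

universe u v

namespace RoeCartan

/-
Because `a` normalises `B` and `B` contains an approximate unit for `A`, the limit `a* a` of the
elements `a* eᵢ a` lies in the closed algebra `B ≅ ℓ∞(I)`; there it is a function `β ≥ 0`, since
compressing `a* a` by the minimal projection `δᵢ` gives `βᵢ δᵢ`. Cut `β` off at `ε²`: with
`χ = 1_{β ≥ ε²}` and `γ = β^{-1/2} χ`, the operator `v = a γ` satisfies `v* v = χ`, so it is a
partial isometry normalising `B`, and `f = v (γ β) v* ∈ B` satisfies `f v = a χ`. Finally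
`‖a - a χ‖² = ‖(1 - χ) β (1 - χ)‖ ≤ ε²`.
-/

open scoped ComplexOrder

section CStarAlgebra

variable {C E : Type*} [NonUnitalCommCStarAlgebra C] [NonUnitalCStarAlgebra E]

theorem norm_sub_mul_map_sq_le (ψ : C →⋆ₙₐ[ℂ] E) {a : E} {β χ : C}
    (hβ : ψ β = star a * a) (hχ : IsSelfAdjoint χ) (hχχ : IsIdempotentElem χ) :
    ‖a - a * ψ χ‖ ^ 2 ≤ ‖β - β * χ‖ := by
  have hp : star (ψ χ) = ψ χ := by rw [← map_star, hχ.star_eq]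
  have key : star (a - a * ψ χ) * (a - a * ψ χ) = ψ (β - β * χ) := by
    calc star (a - a * ψ χ) * (a - a * ψ χ)
        = star a * a - ψ χ * (star a * a) - star a * a * ψ χ
            + ψ χ * (star a * a) * ψ χ := by
          rw [star_sub, star_mul, hp]; noncomm_ring
      _ = ψ (β - χ * β - β * χ + χ * β * χ) := by simp only [map_sub, map_add, map_mul, hβ]
      _ = ψ (β - β * χ) := by
          rw [mul_comm χ β, mul_assoc β χ χ, hχχ.eq, sub_add_cancel]
  rw [sq, ← CStarRing.norm_star_mul_self, key]
  exact NonUnitalStarAlgHom.norm_apply_le ψ _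

end CStarAlgebra

section LpInfty

variable {I : Type*}

theorem exists_cutoff_lpInfty (β : lp (fun _ : I => ℂ) ∞) (hβ : ∀ i, 0 ≤ β i) {δ : ℝ}
    (hδ : 0 < δ) :
    ∃ γ χ : lp (fun _ : I => ℂ) ∞, IsSelfAdjoint γ ∧ IsSelfAdjoint χ ∧ γ * χ = γ ∧
      γ * γ * β = χ ∧ ‖β - β * χ‖ ≤ δ := by
  classical
  let P : I → Prop := fun i => δ ≤ ‖β i‖
  have hγ : Memℓp (fun i => if P i then ((√‖β i‖)⁻¹ : ℂ) else 0) ∞ := by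
    refine memℓp_infty ⟨(√δ)⁻¹, ?_⟩
    rintro _ ⟨i, rfl⟩
    by_cases hi : P i
    · simp only [hi, if_true, norm_inv, Complex.norm_real, Real.norm_eq_abs,
        abs_of_nonneg (Real.sqrt_nonneg _)]
      exact inv_anti₀ (Real.sqrt_pos.2 hδ) (Real.sqrt_le_sqrt hi)
    · simp [hi]
  have hχ : Memℓp (fun i => if P i then (1 : ℂ) else 0) ∞ := by
    refine memℓp_infty ⟨1, ?_⟩
    rintro _ ⟨i, rfl⟩
    by_cases hi : P i <;> simp [hi]
  refine ⟨⟨_, hγ⟩, ⟨_, hχ⟩, ?_, ?_, ?_, ?_, ?_⟩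
  · ext i
    by_cases hi : P i <;> simp [hi, ← Complex.ofReal_inv]
  · ext i
    by_cases hi : P i <;> simp [hi]
  · ext i
    by_cases hi : P i <;> simp [lp.infty_coeFn_mul, hi]
  · ext i
    by_cases hi : P i
    · simp only [lp.infty_coeFn_mul, Pi.mul_apply, hi, if_true]
      set s := √‖β i‖
      have hs : (s : ℂ) ≠ 0 := by exact_mod_cast (Real.sqrt_pos.2 (hδ.trans_le hi)).ne'
      have hβi : β i = (s : ℂ) * (s : ℂ) := by
        rw [← Complex.ofReal_mul, Real.mul_self_sqrt (norm_nonneg _)]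
        exact Complex.eq_coe_norm_of_nonneg (hβ i)
      rw [hβi]
      field_simp
    · simp [lp.infty_coeFn_mul, hi]
  · refine lp.norm_le_of_forall_le hδ.le fun i => ?_
    rw [lp.coeFn_sub, lp.infty_coeFn_mul, Pi.sub_apply, Pi.mul_apply]
    by_cases hi : P i
    · simp [hi, hδ.le]
    · simpa [hi] using (not_le.1 hi).le

end LpInfty

section Operators

variable {H : Type u} [NormedAddCommGroup H] [InnerProductSpace ℂ H] [CompleteSpace H]

theorem star_mul_self_mem_of_mem_normalizerIn {A B : Set (H →L[ℂ] H)} (hBcl : IsClosed B)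
    (hu : HasApproxUnitIn B A) {a : H →L[ℂ] H} (ha : a ∈ NormalizerIn A B) :
    star a * a ∈ B := by
  obtain ⟨ι, l, e, hl, heB, he⟩ := hu
  have hlim : Tendsto (fun i => star a * e i * a) l (nhds (star a * a)) := by
    simpa only [mul_assoc] using ((he a ha.1).1).const_mul (star a)
  exact hBcl.mem_of_tendsto hlim (Eventually.of_forall fun i => (ha.2 (e i) (heB i)).2)

theorem mul_mem_normalizerIn {SA SB : NonUnitalStarSubalgebra ℂ (H →L[ℂ] H)} (hBA : SB ≤ SA)
    {a c : H →L[ℂ] H} (ha : a ∈ NormalizerIn SA SB) (hc : c ∈ SB) :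
    a * c ∈ NormalizerIn SA SB := by
  refine ⟨mul_mem ha.1 (hBA hc), fun b hb => ⟨?_, ?_⟩⟩
  · have := (ha.2 (c * b * star c) (mul_mem (mul_mem hc hb) (star_mem hc))).1
    simpa only [star_mul, mul_assoc, SetLike.mem_coe] using this
  · have := mul_mem (mul_mem (star_mem hc) (ha.2 b hb).2) hc
    simpa only [star_mul, mul_assoc, SetLike.mem_coe] using this

theorem nonneg_of_star_mul_self_eq_smul {q b : H →L[ℂ] H} {t : ℂ} (hq : IsIdempotentElem q)
    (hq0 : q ≠ 0) (h : star b * b = t • q) : 0 ≤ t := by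
  obtain ⟨ξ, hξ⟩ : ∃ ξ, q ξ ≠ 0 := by
    by_contra! h0
    exact hq0 (ContinuousLinearMap.ext h0)
  set ζ := q ξ
  have hqζ : q ζ = ζ := by rw [← mul_apply_eq_comp, hq.eq]
  have key : ((‖b ζ‖ ^ 2 : ℝ) : ℂ) = t * ((‖ζ‖ ^ 2 : ℝ) : ℂ) := by
    calc ((‖b ζ‖ ^ 2 : ℝ) : ℂ) = ⟪ζ, (star b * b) ζ⟫_ℂ := by
          rw [mul_apply_eq_comp, ContinuousLinearMap.star_eq_adjoint,
            ContinuousLinearMap.adjoint_inner_right, inner_self_eq_norm_sq_to_K]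
          push_cast; rfl
      _ = t * ((‖ζ‖ ^ 2 : ℝ) : ℂ) := by
          rw [h, smul_apply, hqζ, inner_smul_right, inner_self_eq_norm_sq_to_K]
          push_cast; rfl
  have hζ : (0 : ℝ) < ‖ζ‖ ^ 2 := by positivity
  rw [show t = ((‖b ζ‖ ^ 2 / ‖ζ‖ ^ 2 : ℝ) : ℂ) by
    rw [Complex.ofReal_div, key, mul_div_cancel_right₀ _ (by exact_mod_cast hζ.ne')]]
  exact Complex.zero_le_real.2 (by positivity)

theorem nonneg_apply_of_map_eq_star_mul_self {I : Type*}
    (ψ : lp (fun _ : I => ℂ) ∞ →⋆ₙₐ[ℂ] (H →L[ℂ] H)) (hψ : Function.Injective ψ)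
    {β : lp (fun _ : I => ℂ) ∞} {a : H →L[ℂ] H} (h : ψ β = star a * a) (i : I) :
    0 ≤ β i := by
  classical
  set e : lp (fun _ : I => ℂ) ∞ := lp.single ∞ i 1
  have he : star e = e := by
    ext j; by_cases hj : j = i <;> simp [e, hj]
  have hee : e * e = e := by
    ext j; by_cases hj : j = i <;> simp [e, hj, lp.infty_coeFn_mul]
  have heβe : e * β * e = β i • e := by
    ext j; by_cases hj : j = i <;> simp [e, hj, lp.infty_coeFn_mul]
  have he0 : e ≠ 0 := fun h0 => by simpa [e] using congrArg (· i) h0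
  refine nonneg_of_star_mul_self_eq_smul (q := ψ e) (b := a * ψ e) ?_
    ((map_ne_zero_iff ψ hψ).2 he0) ?_
  · rw [IsIdempotentElem, ← map_mul, hee]
  · rw [star_mul, ← map_star, he, ← map_smul, ← heβe, map_mul, map_mul, h]
    noncomm_ring

theorem exists_partialIsometry_approx_of_cutoff {C : Type*} [NonUnitalCommCStarAlgebra C]
    {SA SB : NonUnitalStarSubalgebra ℂ (H →L[ℂ] H)} (hBA : SB ≤ SA)
    (ψ : C →⋆ₙₐ[ℂ] (H →L[ℂ] H)) (hψ : ∀ x, ψ x ∈ SB) {a : H →L[ℂ] H}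
    (ha : a ∈ NormalizerIn SA SB) {β γ χ : C} (hβ : ψ β = star a * a)
    (hγ : IsSelfAdjoint γ) (hχ : IsSelfAdjoint χ) (hγχ : γ * χ = γ) (hγγβ : γ * γ * β = χ) :
    ∃ f ∈ SB, ∃ v ∈ SA, v * star v * v = v ∧
      (∀ b ∈ SB, v * b * star v ∈ SB ∧ star v * b * v ∈ SB) ∧
      ‖a - f * v‖ ^ 2 ≤ ‖β - β * χ‖ := by
  have hχχ : IsIdempotentElem χ := by
    calc χ * χ = γ * χ * (γ * β) := by rw [← hγγβ]; simp only [mul_comm, mul_left_comm]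
      _ = χ := by rw [hγχ, ← mul_assoc, hγγβ]
  have hγβχ : γ * β * χ = γ * β := by rw [mul_right_comm, hγχ]
  set v := a * ψ γ
  have hv : v ∈ NormalizerIn SA SB := mul_mem_normalizerIn hBA ha (hψ γ)
  have hvv : star v * v = ψ χ := by
    calc star v * v = ψ γ * (star a * a) * ψ γ := by
          rw [star_mul, ← map_star, hγ.star_eq]; noncomm_ring
      _ = ψ χ := by rw [← hβ, ← map_mul, ← map_mul, mul_right_comm, hγγβ]
  have hfv : v * ψ (γ * β) * star v * v = a * ψ χ := by
    rw [mul_assoc, hvv, mul_assoc, ← map_mul, hγβχ, mul_assoc, ← map_mul, ← mul_assoc, hγγβ]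
  refine ⟨v * ψ (γ * β) * star v, (hv.2 _ (hψ _)).1, v, hv.1, ?_, hv.2, ?_⟩
  · rw [mul_assoc, hvv, mul_assoc, ← map_mul, hγχ]
  · rw [hfv]
    exact norm_sub_mul_map_sq_le ψ hβ hχ hχχ

end Operators

theorem stmt13_general {H : Type u} [NormedAddCommGroup H] [InnerProductSpace ℂ H] [CompleteSpace H]
    (A B : Set (H →L[ℂ] H))
    (hB : IsCartanIn B A)
    (I : Type u) (hlinf : AbstractlyLinf B I) :
    ∀ a ∈ NormalizerIn A B, ∀ ε > (0 : ℝ),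
      ∃ f ∈ B, ∃ v ∈ A, v * star v * v = v ∧
        (∀ b ∈ B, v * b * star v ∈ B ∧ star v * b * v ∈ B) ∧
        ‖a - f * v‖ ≤ ε := by
  intro a ha ε hε
  obtain ⟨SB, rfl, ⟨φ⟩⟩ := hlinf
  obtain ⟨⟨-, SA, rfl⟩, ⟨hBcl, -⟩, ⟨hBA, -⟩, happrox, -⟩ := hB
  let ψ : lp (fun _ : I => ℂ) ∞ →⋆ₙₐ[ℂ] (H →L[ℂ] H) :=
    (NonUnitalStarSubalgebraClass.subtype SB).comp (φ.symm : lp (fun _ : I => ℂ) ∞ →⋆ₙₐ[ℂ] SB)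
  have hψinj : Function.Injective ψ := Subtype.val_injective.comp φ.symm.injective
  have haa : star a * a ∈ SB := star_mul_self_mem_of_mem_normalizerIn hBcl happrox ha
  have hψβ : ψ (φ ⟨_, haa⟩) = star a * a := by simp [ψ]
  obtain ⟨γ, χ, hγ, hχ, hγχ, hγγβ, hδ⟩ := exists_cutoff_lpInfty _
    (nonneg_apply_of_map_eq_star_mul_self ψ hψinj hψβ) (pow_pos hε 2)
  obtain ⟨f, hf, v, hv, hvv, hvB, hle⟩ := exists_partialIsometry_approx_of_cutoff hBA ψ
    (fun x => (φ.symm x).2) ha hψβ hγ hχ hγχ hγγβ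
  exact ⟨f, hf, v, hv, hvv, hvB, (pow_le_pow_iff_left₀ (norm_nonneg _) hε.le two_ne_zero).1
    (hle.trans hδ)⟩

/-- Every normaliser of a Cartan subalgebra `B ≅ ℓ∞(I)` can be approximated in
norm by products `f v` with `f ∈ B` and `v ∈ A` a partial isometry normalising `B`. -/
theorem stmt13 {H : Type u} [NormedAddCommGroup H] [InnerProductSpace ℂ H] [CompleteSpace H]
    (A B : Set (H →L[ℂ] H))
    (hunital : (1 : H →L[ℂ] H) ∈ A)
    (hK : ∀ k : H →L[ℂ] H, IsCompactOperator (⇑k) → k ∈ A)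
    (hB : IsCartanIn B A)
    (I : Type u) (hlinf : AbstractlyLinf B I) :
    ∀ a ∈ NormalizerIn A B, ∀ ε > (0 : ℝ),
      ∃ f ∈ B, ∃ v ∈ A, v * star v * v = v ∧
        (∀ b ∈ B, v * b * star v ∈ B ∧ star v * b * v ∈ B) ∧
        ‖a - f * v‖ ≤ ε :=
  stmt13_general A B hB I hlinf

end RoeCartan
end
end

section
/- Let X and Y be bounded geometry metric spaces, at least one of which is non-amenable, and let f : X → Y be a coarse equivalence. Then there exists a bijective coarse equivalence h : X → Y which is close to f, i.e. sup_{x∈X} d_Y(f(x), h(x)) < ∞. -/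
/- Common definitions for formalising "Cartan subalgebras of uniform Roe algebras"
   (White–Willett).  We model C*-subalgebras of B(H) as norm-closed sets of
   continuous linear operators underlying non-unital star subalgebras. -/

open scoped InnerProductSpace ENNReal
open Filter

noncomputable section

universe u v

namespace RoeCartan

/-! Whyte's argument. Non-amenability of `Y` makes finite sets expand: for every `m` there is an
`R` such that the closed `R`-neighbourhood of every finite `S ⊆ Y` has at least `m |S|` points.
A coarse equivalence `f` with coarse inverse `g` is boundedly finite-to-one, so this expansion
beats its multiplicity, and Hall's marriage theorem gives injections `X → Y` close to `f` and
`Y → X` close to `g`. Schröder–Bernstein, in the form that keeps a pointwise relation, glues them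
into a bijection close to `f`. If instead `X` is non-amenable, the same applies to `g`, and the
inverse of the resulting bijection is close to `f`. -/

open Set Function Metric

section Close

variable {α β γ : Type*} [MetricSpace β] [MetricSpace γ]

lemma Close.symm {f g : α → β} (h : Close f g) : Close g f := by
  obtain ⟨C, hC⟩ := h
  exact ⟨C, fun a => dist_comm (f a) (g a) ▸ hC a⟩

lemma Close.trans {f g k : α → β} (hfg : Close f g) (hgk : Close g k) : Close f k := by
  obtain ⟨C, hC⟩ := hfg
  obtain ⟨D, hD⟩ := hgk
  exact ⟨C + D, fun a => (dist_triangle _ (g a) _).trans (add_le_add (hC a) (hD a))⟩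

lemma Close.comp_right {f g : α → β} (h : Close f g) {δ : Type*} (k : δ → α) :
    Close (fun d => f (k d)) fun d => g (k d) := by
  obtain ⟨C, hC⟩ := h
  exact ⟨C, fun d => hC (k d)⟩

lemma UniformlyExpansive.comp_close {f : β → γ} (hf : UniformlyExpansive f) {g k : α → β}
    (h : Close g k) : Close (fun a => f (g a)) fun a => f (k a) := by
  obtain ⟨C, hC⟩ := h
  obtain ⟨s, hs⟩ := hf C
  exact ⟨s, fun a => hs _ _ (hC a)⟩

lemma UniformlyExpansive.of_close {f g : β → γ} (hf : UniformlyExpansive f) (h : Close f g) :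
    UniformlyExpansive g := by
  obtain ⟨C, hC⟩ := h
  intro r
  obtain ⟨s, hs⟩ := hf r
  refine ⟨C + s + C, fun x x' hxx' => ?_⟩
  calc dist (g x) (g x') ≤ dist (g x) (f x) + dist (f x) (f x') + dist (f x') (g x') :=
        dist_triangle4 _ _ _ _
    _ ≤ C + s + C := by
        gcongr
        exacts [dist_comm (g x) (f x) ▸ hC x, hs x x' hxx', hC x']

lemma IsCoarseEquivalence.of_close {f h : β → γ} (hf : IsCoarseEquivalence f) (hfh : Close f h) :
    IsCoarseEquivalence h := by
  obtain ⟨hf_ue, g, hg_ue, hgf, hfg⟩ := hf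
  exact ⟨hf_ue.of_close hfh, g, hg_ue, (hg_ue.comp_close hfh).symm.trans hgf,
    (hfh.comp_right g).symm.trans hfg⟩

end Close

section ClosedNbhd

variable {Z W : Type*} [MetricSpace Z] [MetricSpace W]

/-- For finite `S` and `0 ≤ R` this is `Metric.cthickening R S`; the explicit form is the one the
counting arguments need. -/
def closedNbhd (R : ℝ) (S : Set Z) : Set Z := {z | ∃ s ∈ S, dist z s ≤ R}

lemma closedNbhd_eq_biUnion (R : ℝ) (S : Set Z) :
    closedNbhd R S = ⋃ s ∈ S, closedBall s R := by
  ext; simp [closedNbhd]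

lemma subset_closedNbhd {R : ℝ} (hR : 0 ≤ R) (S : Set Z) : S ⊆ closedNbhd R S :=
  fun s hs => ⟨s, hs, by simpa using hR⟩

lemma closedNbhd_closedNbhd_subset (R r : ℝ) (S : Set Z) :
    closedNbhd r (closedNbhd R S) ⊆ closedNbhd (R + r) S := by
  rintro z ⟨w, ⟨s, hs, hws⟩, hzw⟩
  exact ⟨s, hs, by linarith [dist_triangle z w s]⟩

lemma image_closedNbhd_subset {g : Z → W} {R s : ℝ}
    (hg : ∀ z z', dist z z' ≤ R → dist (g z) (g z') ≤ s) (S : Set Z) :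
    g '' closedNbhd R S ⊆ closedNbhd s (g '' S) := by
  rintro _ ⟨z, ⟨z', hz', hzz'⟩, rfl⟩
  exact ⟨g z', mem_image_of_mem g hz', hg z z' hzz'⟩

lemma ncard_closedNbhd_le {R : ℝ} {N : ℕ} (hN : ∀ z : Z, (closedBall z R).ncard ≤ N)
    {S : Set Z} (hS : S.Finite) : (closedNbhd R S).ncard ≤ N * S.ncard := by
  calc (closedNbhd R S).ncard = (⋃ s ∈ hS.toFinset, closedBall s R).ncard := by
        simp [closedNbhd_eq_biUnion]
    _ ≤ ∑ s ∈ hS.toFinset, (closedBall s R).ncard := Finset.set_ncard_biUnion_le _ _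
    _ ≤ ∑ _s ∈ hS.toFinset, N := Finset.sum_le_sum fun s _ => hN s
    _ = N * S.ncard := by simp [ncard_eq_toFinset_card S hS, mul_comm]

lemma BoundedGeometry.finite_closedBall (hZ : BoundedGeometry Z) (z : Z) (R : ℝ) :
    (closedBall z R).Finite :=
  ((hZ R).choose_spec z).1

lemma BoundedGeometry.closedNbhd_finite (hZ : BoundedGeometry Z) (R : ℝ) {S : Set Z}
    (hS : S.Finite) : (closedNbhd R S).Finite := by
  rw [closedNbhd_eq_biUnion]
  exact hS.biUnion fun s _ => hZ.finite_closedBall s R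

end ClosedNbhd

section Expansion

variable {Z : Type*} [MetricSpace Z]

lemma rBoundary_subset_closedNbhd_diff {r : ℝ} (hr : 0 ≤ r) (S : Set Z) :
    rBoundary r S ⊆ closedNbhd r (closedNbhd r S \ S) := by
  rintro x ⟨⟨s, hs, hxs⟩, t, ht, hxt⟩
  by_cases hx : x ∈ S
  · exact ⟨t, ⟨⟨x, hx, dist_comm t x ▸ hxt⟩, ht⟩, hxt⟩
  · exact ⟨x, ⟨⟨s, hs, hxs⟩, hx⟩, by simpa using hr⟩

/-- The `r`-boundary, which exceeds `ε |S|`, is at most `N` times the shell `N_r(S) \ S`, where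
`N` bounds the size of `r`-balls; so the shell has size at least `ε / (N + 1) * |S|`. -/
lemma exists_one_lt_mul_ncard_le_of_not_bwAmenable (hZ : BoundedGeometry Z)
    (hna : ¬ BWAmenable Z) :
    ∃ r c : ℝ, 1 < c ∧ ∀ S : Set Z, S.Finite → c * S.ncard ≤ (closedNbhd r S).ncard := by
  simp only [BWAmenable, not_forall, not_exists, not_and, not_le] at hna
  obtain ⟨r, hr, ε, hε, hbdry⟩ := hna
  obtain ⟨N, hN⟩ := hZ r
  refine ⟨r, 1 + ε / (N + 1), by simp only [lt_add_iff_pos_right]; positivity,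
    fun S hS => ?_⟩
  rcases S.eq_empty_or_nonempty with rfl | hne
  · simp
  have hfin := hZ.closedNbhd_finite r hS
  have hshell : ((closedNbhd r S \ S).ncard : ℝ) + S.ncard = (closedNbhd r S).ncard := by
    exact_mod_cast ncard_sdiff_add_ncard_of_subset (subset_closedNbhd hr.le S) hfin
  have hbound : ε * S.ncard ≤ (N + 1) * (closedNbhd r S \ S).ncard :=
    calc ε * S.ncard ≤ (rBoundary r S).ncard := (hbdry S hS hne).le
      _ ≤ (closedNbhd r (closedNbhd r S \ S)).ncard := by
          exact_mod_cast ncard_le_ncard (rBoundary_subset_closedNbhd_diff hr.le S)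
            (hZ.closedNbhd_finite r hfin.sdiff)
      _ ≤ N * (closedNbhd r S \ S).ncard := by
          exact_mod_cast ncard_closedNbhd_le (fun z => (hN z).2) hfin.sdiff
      _ ≤ (N + 1) * (closedNbhd r S \ S).ncard := by gcongr; linarith
  have : ε / (N + 1) * S.ncard ≤ (closedNbhd r S \ S).ncard := by
    rw [div_mul_eq_mul_div, div_le_iff₀ (by positivity)]
    linarith
  linarith

lemma pow_mul_ncard_le_ncard_closedNbhd (hZ : BoundedGeometry Z) {r c : ℝ} (hc : 0 ≤ c)
    (hgrow : ∀ S : Set Z, S.Finite → c * S.ncard ≤ (closedNbhd r S).ncard)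
    {S : Set Z} (hS : S.Finite) (n : ℕ) : c ^ n * S.ncard ≤ (closedNbhd (n * r) S).ncard := by
  induction n with
  | zero =>
    simpa using ncard_le_ncard (subset_closedNbhd le_rfl S) (hZ.closedNbhd_finite 0 hS)
  | succ n ih =>
    have hsub : closedNbhd r (closedNbhd (n * r) S) ⊆ closedNbhd ((n + 1 : ℕ) * r) S := by
      simpa [add_mul] using closedNbhd_closedNbhd_subset (n * r) r S
    calc c ^ (n + 1) * S.ncard = c * (c ^ n * S.ncard) := by ring
      _ ≤ c * (closedNbhd (n * r) S).ncard := by gcongr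
      _ ≤ (closedNbhd r (closedNbhd (n * r) S)).ncard := hgrow _ (hZ.closedNbhd_finite _ hS)
      _ ≤ (closedNbhd ((n + 1 : ℕ) * r) S).ncard := by
          exact_mod_cast ncard_le_ncard hsub (hZ.closedNbhd_finite _ hS)

theorem exists_expansion_of_not_bwAmenable (hZ : BoundedGeometry Z) (hna : ¬ BWAmenable Z)
    (m : ℕ) : ∃ R : ℝ, ∀ S : Set Z, S.Finite → m * S.ncard ≤ (closedNbhd R S).ncard := by
  obtain ⟨r, c, hc, hgrow⟩ := exists_one_lt_mul_ncard_le_of_not_bwAmenable hZ hna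
  obtain ⟨n, hn⟩ := pow_unbounded_of_one_lt (m : ℝ) hc
  refine ⟨n * r, fun S hS => ?_⟩
  have hpow := pow_mul_ncard_le_ncard_closedNbhd hZ (by linarith) hgrow hS n
  have : (m : ℝ) * S.ncard ≤ c ^ n * S.ncard := by gcongr
  exact_mod_cast this.trans hpow

end Expansion

section Matching

variable {X Y : Type*} [MetricSpace X] [MetricSpace Y]

/-- `S` lies in the `C`-neighbourhood of `ψ (φ S)`. -/
lemma exists_ncard_le_mul_ncard_image (hX : BoundedGeometry X) {α : Type*} {φ : X → α}
    {ψ : α → X} (hψφ : Close (fun x => ψ (φ x)) fun x => x) :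
    ∃ k : ℕ, 0 < k ∧ ∀ S : Set X, S.Finite → S.ncard ≤ k * (φ '' S).ncard := by
  obtain ⟨C, hC⟩ := hψφ
  obtain ⟨N, hN⟩ := hX C
  refine ⟨N + 1, N.succ_pos, fun S hS => ?_⟩
  have hψφS : (ψ '' (φ '' S)).Finite := (hS.image φ).image ψ
  have hsub : S ⊆ closedNbhd C (ψ '' (φ '' S)) := fun x hx =>
    ⟨ψ (φ x), mem_image_of_mem ψ (mem_image_of_mem φ hx), dist_comm x _ ▸ hC x⟩
  calc S.ncard ≤ (closedNbhd C (ψ '' (φ '' S))).ncard :=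
        ncard_le_ncard hsub (hX.closedNbhd_finite C hψφS)
    _ ≤ N * (ψ '' (φ '' S)).ncard := ncard_closedNbhd_le (fun x => (hN x).2) hψφS
    _ ≤ (N + 1) * (φ '' S).ncard := by
        gcongr
        · exact N.le_succ
        · exact ncard_image_le (hS.image φ)

lemma exists_injective_dist_le_of_hall {α : Type*} (φ : α → Y) {R : ℝ}
    (hfin : ∀ y : Y, (closedBall y R).Finite)
    (hall : ∀ S : Set α, S.Finite → S.ncard ≤ (closedNbhd R (φ '' S)).ncard) :
    ∃ i : α → Y, Injective i ∧ ∀ a, dist (φ a) (i a) ≤ R := by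
  classical
  let t : α → Finset Y := fun a => (hfin (φ a)).toFinset
  have ht (s : Finset α) : ((s.biUnion t : Finset Y) : Set Y) = closedNbhd R (φ '' s) := by
    ext; simp [t, closedNbhd_eq_biUnion]
  obtain ⟨i, hi, hit⟩ := (Finset.all_card_le_biUnion_card_iff_exists_injective t).1 fun s => by
    have := hall s s.finite_toSet
    rwa [← ht s, ncard_coe_finset, ncard_coe_finset] at this
  exact ⟨i, hi, fun a => by simpa [t, dist_comm] using hit a⟩

theorem exists_injective_close_of_not_bwAmenable_codomain (hX : BoundedGeometry X)
    (hY : BoundedGeometry Y) (hnaY : ¬ BWAmenable Y) {φ : X → Y} {ψ : Y → X}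
    (hψφ : Close (fun x => ψ (φ x)) fun x => x) : ∃ i : X → Y, Injective i ∧ Close φ i := by
  obtain ⟨k, -, hk⟩ := exists_ncard_le_mul_ncard_image hX hψφ
  obtain ⟨R, hR⟩ := exists_expansion_of_not_bwAmenable hY hnaY k
  obtain ⟨i, hi, hφi⟩ := exists_injective_dist_le_of_hall φ (hY.finite_closedBall · R)
    fun S hS => (hk S hS).trans (hR _ (hS.image φ))
  exact ⟨i, hi, R, hφi⟩

theorem exists_injective_close_of_not_bwAmenable_domain (hX : BoundedGeometry X)
    (hnaX : ¬ BWAmenable X) (hY : BoundedGeometry Y) {φ : X → Y} {ψ : Y → X}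
    (hφ : UniformlyExpansive φ) (hψφ : Close (fun x => ψ (φ x)) fun x => x) :
    ∃ i : X → Y, Injective i ∧ Close φ i := by
  obtain ⟨k, hk_pos, hk⟩ := exists_ncard_le_mul_ncard_image hX hψφ
  obtain ⟨R, hR⟩ := exists_expansion_of_not_bwAmenable hX hnaX k
  obtain ⟨s, hs⟩ := hφ R
  have hall (S : Set X) (hS : S.Finite) : S.ncard ≤ (closedNbhd s (φ '' S)).ncard := by
    refine Nat.le_of_mul_le_mul_left ?_ hk_pos
    calc k * S.ncard ≤ (closedNbhd R S).ncard := hR S hS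
      _ ≤ k * (φ '' closedNbhd R S).ncard := hk _ (hX.closedNbhd_finite R hS)
      _ ≤ k * (closedNbhd s (φ '' S)).ncard := Nat.mul_le_mul_left k <|
          ncard_le_ncard (image_closedNbhd_subset hs S) (hY.closedNbhd_finite s (hS.image φ))
  obtain ⟨i, hi, hφi⟩ := exists_injective_dist_le_of_hall φ (hY.finite_closedBall · s) hall
  exact ⟨i, hi, s, hφi⟩

theorem exists_bijective_close_of_not_bwAmenable_codomain (hX : BoundedGeometry X)
    (hY : BoundedGeometry Y) (hnaY : ¬ BWAmenable Y) {f : X → Y} (hf : IsCoarseEquivalence f) :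
    ∃ h : X → Y, Bijective h ∧ Close f h := by
  obtain ⟨hf_ue, g, hg_ue, hgf, hfg⟩ := hf
  obtain ⟨i, hi, C, hfi⟩ := exists_injective_close_of_not_bwAmenable_codomain hX hY hnaY hgf
  obtain ⟨j, hj, hgj⟩ := exists_injective_close_of_not_bwAmenable_domain hY hnaY hX hg_ue hfg
  obtain ⟨D, hfj⟩ : Close (fun y => f (j y)) fun y => y := (hf_ue.comp_close hgj).symm.trans hfg
  obtain ⟨h, hh, hfh⟩ := Embedding.schroeder_bernstein_of_rel hi hj
    (fun x y => dist (f x) y ≤ max C D) (fun x => (hfi x).trans (le_max_left C D))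
    (fun y => (hfj y).trans (le_max_right C D))
  exact ⟨h, hh, max C D, hfh⟩

theorem exists_bijective_close_of_not_bwAmenable_domain (hX : BoundedGeometry X)
    (hY : BoundedGeometry Y) (hnaX : ¬ BWAmenable X) {f : X → Y} (hf : IsCoarseEquivalence f) :
    ∃ h : X → Y, Bijective h ∧ Close f h := by
  obtain ⟨hf_ue, g, hg_ue, hgf, hfg⟩ := hf
  obtain ⟨e, he, hge⟩ :=
    exists_bijective_close_of_not_bwAmenable_codomain hY hX hnaX ⟨hg_ue, f, hf_ue, hfg, hgf⟩
  let e' : Y ≃ X := Equiv.ofBijective e he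
  have hfe : Close (fun y => f (e y)) fun y => y := (hf_ue.comp_close hge).symm.trans hfg
  refine ⟨e'.symm, e'.symm.bijective, ?_⟩
  have hee (x : X) : e (e'.symm x) = x := e'.apply_symm_apply x
  simpa only [hee] using hfe.comp_right e'.symm

end Matching

/-- Whyte: A coarse equivalence between bounded geometry metric spaces, at
least one of which is non-amenable, is close to a bijective coarse equivalence. -/
theorem stmt16 {X : Type u} {Y : Type v} [MetricSpace X] [MetricSpace Y]
    (hbgX : BoundedGeometry X) (hbgY : BoundedGeometry Y)
    (hna : ¬ BWAmenable X ∨ ¬ BWAmenable Y)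
    (f : X → Y) (hf : IsCoarseEquivalence f) :
    ∃ h : X → Y, Function.Bijective h ∧ IsCoarseEquivalence h ∧ Close f h := by
  obtain ⟨h, hh, hfh⟩ := hna.elim
    (exists_bijective_close_of_not_bwAmenable_domain hbgX hbgY · hf)
    (exists_bijective_close_of_not_bwAmenable_codomain hbgX hbgY · hf)
  exact ⟨h, hh, hf.of_close hfh, hfh⟩

end RoeCartan
end
end
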